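/- arXiv:2404.09947 — 6 statements merged into one kernel-verified Lean document; each statement's English description precedes it below -/
import Mathlib

section
/- Let f_d be a probability density on ℝ² with finite mean dispersal distance μ = ∬ |x| f_d(x) dA. Define G(x)·n for a unit vector n by G(x)·n = ∬_{y ∈ Ĥ} (y·n / |y|²) (∫_{|y|}^∞ f_d(r, θ_y) r dr) dA, where Ĥ ⊂ ℝ² is any measurable set. Then for every unit vector n and every measurable Ĥ, G(x)·n ≤ (1/2) n · E[X_d] + μ/2, where E[X_d] = ∬ y f_d(y) dA. -/
/-!
In polar coordinates `y = ρ e_θ` the weight `(y·n) / |y|²` times the Jacobian `ρ` is `e_θ·n`,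
independent of `ρ`, and `∫₀^∞ ∫_ρ^∞ f(r e_θ) r dr dρ = ∫₀^∞ f(r e_θ) r² dr`. Hence, after dropping
the negative part of the integrand and enlarging `Ĥ` to the plane, the left side is at most
`∫ (x·n)⁺ f_d(x) dx`, and `(x·n)⁺ ≤ (x·n + |x|) / 2` for a unit vector `n`.

Tonelli needs measurability, which `f_d` only has almost everywhere; the argument is run in
`ℝ≥0∞` with a measurable majorant of `f_d` that agrees with it almost everywhere, so the ray
integrals only increase while the final integral is unchanged.
-/

open MeasureTheory Real Set

open scoped ENNReal

theorem AEMeasurable.exists_measurable_ge_ae_eq {α β : Type*} [MeasurableSpace α]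
    [MeasurableSpace β] [Preorder β] [OrderTop β] {μ : Measure α} {f : α → β}
    (hf : AEMeasurable f μ) : ∃ g : α → β, Measurable g ∧ f ≤ g ∧ g =ᵐ[μ] f := by
  classical
  set N := toMeasurable μ {x | f x ≠ hf.mk f x}
  have hN : μ N = 0 := by rw [measure_toMeasurable]; exact hf.ae_eq_mk
  refine ⟨N.piecewise (fun _ ↦ ⊤) (hf.mk f),
    measurable_const.piecewise (measurableSet_toMeasurable _ _) hf.measurable_mk, fun x ↦ ?_, ?_⟩
  · by_cases hx : x ∈ N
    · simp [hx]
    · rw [piecewise_eq_of_notMem _ _ _ hx]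
      exact (not_not.1 fun h ↦ hx (subset_toMeasurable _ _ h)).le
  · filter_upwards [measure_eq_zero_iff_ae_notMem.1 hN, hf.ae_eq_mk] with x hx hfx
    rw [piecewise_eq_of_notMem _ _ _ hx, hfx]

theorem ofReal_integral_le_lintegral_ofReal {α : Type*} [MeasurableSpace α] {μ : Measure α}
    (f : α → ℝ) : ENNReal.ofReal (∫ x, f x ∂μ) ≤ ∫⁻ x, ENNReal.ofReal (f x) ∂μ := by
  by_cases hf : Integrable f μ
  · rw [integral_eq_lintegral_pos_part_sub_lintegral_neg_part hf]
    exact (ENNReal.ofReal_le_ofReal (sub_le_self _ ENNReal.toReal_nonneg)).trans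
      ENNReal.ofReal_toReal_le
  · simp [integral_undef hf]

theorem setLIntegral_Ioi_setLIntegral_Ioi (a : ℝ) {G : ℝ → ℝ≥0∞} (hG : Measurable G) :
    ∫⁻ ρ in Ioi a, ∫⁻ r in Ioi ρ, G r = ∫⁻ r in Ioi a, ENNReal.ofReal (r - a) * G r := by
  have hmeas : Measurable (Function.uncurry fun ρ r : ℝ ↦ (Ioi ρ).indicator G r) :=
    (hG.comp measurable_snd).indicator (measurableSet_lt measurable_fst measurable_snd)
  calc ∫⁻ ρ in Ioi a, ∫⁻ r in Ioi ρ, G r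
      = ∫⁻ ρ in Ioi a, ∫⁻ r in Ioi a, (Ioi ρ).indicator G r := by
        refine setLIntegral_congr_fun measurableSet_Ioi fun ρ hρ ↦ ?_
        rw [lintegral_indicator measurableSet_Ioi, Measure.restrict_restrict measurableSet_Ioi,
          inter_eq_left.2 (Ioi_subset_Ioi (le_of_lt hρ))]
    _ = ∫⁻ r in Ioi a, ∫⁻ ρ in Ioi a, (Ioi ρ).indicator G r :=
        lintegral_lintegral_swap hmeas.aemeasurable
    _ = ∫⁻ r in Ioi a, ENNReal.ofReal (r - a) * G r := by
        refine setLIntegral_congr_fun measurableSet_Ioi fun r hr ↦ ?_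
        have hslice : (fun ρ ↦ (Ioi ρ).indicator G r) = (Iio r).indicator fun _ ↦ G r := by
          ext ρ; by_cases h : ρ < r <;> simp [h]
        rw [hslice, lintegral_indicator measurableSet_Iio, setLIntegral_const,
          Measure.restrict_apply measurableSet_Iio, Iio_inter_Ioi, Real.volume_Ioo, mul_comm]

theorem Measurable.setLIntegral_Ioi_fst {β : Type*} [MeasurableSpace β] {Φ : ℝ × β → ℝ≥0∞}
    (hΦ : Measurable Φ) : Measurable fun p : ℝ × β ↦ ∫⁻ r in Ioi p.1, Φ (r, p.2) := by
  have hind : Measurable ({q : (ℝ × β) × ℝ | q.1.1 < q.2}.indicator fun q ↦ Φ (q.2, q.1.2)) :=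
    (hΦ.comp (by fun_prop)).indicator (measurableSet_lt (by fun_prop) measurable_snd)
  convert hind.lintegral_prod_right' (ν := volume) using 2 with p
  rw [← lintegral_indicator measurableSet_Ioi]
  congr 1 with r

theorem lintegral_prod_setLIntegral_Ioi {β : Type*} [MeasurableSpace β] (a : ℝ) (ν : Measure β)
    [SFinite ν] {Φ : ℝ × β → ℝ≥0∞} (hΦ : Measurable Φ) :
    ∫⁻ p, (∫⁻ r in Ioi p.1, Φ (r, p.2)) ∂(volume.restrict (Ioi a)).prod ν
      = ∫⁻ p, ENNReal.ofReal (p.1 - a) * Φ p ∂(volume.restrict (Ioi a)).prod ν := by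
  rw [lintegral_prod_symm' _ hΦ.setLIntegral_Ioi_fst,
    lintegral_prod_symm' (fun p ↦ ENNReal.ofReal (p.1 - a) * Φ p)
      ((ENNReal.measurable_ofReal.comp (measurable_fst.sub_const a)).mul hΦ)]
  congr 1 with θ
  exact setLIntegral_Ioi_setLIntegral_Ioi a (hΦ.comp measurable_prodMk_right)

theorem lintegral_inv_sqrt_mul_setLIntegral_ray {F : ℝ × ℝ → ℝ≥0∞} (hF : Measurable F) :
    ∫⁻ y, ENNReal.ofReal (√(y.1 ^ 2 + y.2 ^ 2))⁻¹ *
        ∫⁻ r in Ioi √(y.1 ^ 2 + y.2 ^ 2), F ((r / √(y.1 ^ 2 + y.2 ^ 2)) • y)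
      = ∫⁻ x, F x := by
  have htarget : volume.restrict polarCoord.target
      = (volume.restrict (Ioi 0)).prod (volume.restrict (Ioo (-π) π)) := by
    rw [polarCoord_target, Measure.volume_eq_prod, Measure.prod_restrict]
  rw [← lintegral_comp_polarCoord_symm, ← lintegral_comp_polarCoord_symm F]
  calc _ = ∫⁻ p in polarCoord.target, ∫⁻ r in Ioi p.1, F (polarCoord.symm (r, p.2)) := by
        refine setLIntegral_congr_fun polarCoord.open_target.measurableSet fun p hp ↦ ?_
        have hp1 : 0 < p.1 := hp.1
        have hnorm : √((p.1 * cos p.2) ^ 2 + (p.1 * sin p.2) ^ 2) = p.1 := by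
          rw [show (p.1 * cos p.2) ^ 2 + (p.1 * sin p.2) ^ 2 = p.1 ^ 2 by
            linear_combination p.1 ^ 2 * sin_sq_add_cos_sq p.2, sqrt_sq hp1.le]
        simp only [polarCoord_symm_apply, hnorm, smul_eq_mul]
        rw [← mul_assoc, ← ENNReal.ofReal_mul hp1.le, mul_inv_cancel₀ hp1.ne', ENNReal.ofReal_one,
          one_mul]
        congr 1 with r
        congr 1
        ext <;> simp only [Prod.smul_mk, smul_eq_mul] <;> field_simp
    _ = _ := by
        rw [htarget]
        simpa only [sub_zero, Function.comp_apply, smul_eq_mul] using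
          lintegral_prod_setLIntegral_Ioi 0 _ (hF.comp continuous_polarCoord_symm.measurable)

theorem abs_mul_add_mul_le_sqrt {n : ℝ × ℝ} (hn : n.1 ^ 2 + n.2 ^ 2 = 1) (x : ℝ × ℝ) :
    |x.1 * n.1 + x.2 * n.2| ≤ √(x.1 ^ 2 + x.2 ^ 2) :=
  Real.abs_le_sqrt (by nlinarith [sq_nonneg (x.1 * n.2 - x.2 * n.1)])

theorem ofReal_mul_setIntegral_ray_le {fd : ℝ × ℝ → ℝ} (hnn : ∀ x, 0 ≤ fd x)
    {n : ℝ × ℝ} {F : ℝ × ℝ → ℝ≥0∞}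
    (hF : ∀ x, ENNReal.ofReal ((x.1 * n.1 + x.2 * n.2) * fd x) ≤ F x) (y : ℝ × ℝ) :
    ENNReal.ofReal ((y.1 * n.1 + y.2 * n.2) / (y.1 ^ 2 + y.2 ^ 2) *
        ∫ r in Ioi √(y.1 ^ 2 + y.2 ^ 2), fd ((r / √(y.1 ^ 2 + y.2 ^ 2)) • y) * r)
      ≤ ENNReal.ofReal (√(y.1 ^ 2 + y.2 ^ 2))⁻¹ *
        ∫⁻ r in Ioi √(y.1 ^ 2 + y.2 ^ 2), F ((r / √(y.1 ^ 2 + y.2 ^ 2)) • y) := by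
  set s := √(y.1 ^ 2 + y.2 ^ 2)
  set c := (y.1 * n.1 + y.2 * n.2) / (y.1 ^ 2 + y.2 ^ 2)
  have hs : y.1 ^ 2 + y.2 ^ 2 = s ^ 2 := (sq_sqrt (by positivity)).symm
  have hpos : ∀ r ∈ Ioi s, 0 ≤ fd ((r / s) • y) * r :=
    fun r hr ↦ mul_nonneg (hnn _) ((sqrt_nonneg _).trans hr.le)
  -- On the ray, `c * r = s⁻¹ * ((r / s) • y)·n`; at `y = 0` both sides vanish as `0⁻¹ = 0`.
  have hray : ∀ r ∈ Ioi s, ENNReal.ofReal c * ENNReal.ofReal (fd ((r / s) • y) * r)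
      ≤ ENNReal.ofReal s⁻¹ * F ((r / s) • y) := by
    intro r hr
    rw [← ENNReal.ofReal_mul' (hpos r hr), show c * (fd ((r / s) • y) * r)
        = s⁻¹ * ((((r / s) • y).1 * n.1 + ((r / s) • y).2 * n.2) * fd ((r / s) • y)) by
      simp only [c, hs, Prod.smul_fst, Prod.smul_snd, smul_eq_mul]; ring,
      ENNReal.ofReal_mul (inv_nonneg.2 (sqrt_nonneg _))]
    gcongr
    exact hF _
  calc ENNReal.ofReal (c * ∫ r in Ioi s, fd ((r / s) • y) * r)
      = ENNReal.ofReal c * ENNReal.ofReal (∫ r in Ioi s, fd ((r / s) • y) * r) :=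
        ENNReal.ofReal_mul' (setIntegral_nonneg measurableSet_Ioi hpos)
    _ ≤ ENNReal.ofReal c * ∫⁻ r in Ioi s, ENNReal.ofReal (fd ((r / s) • y) * r) := by
        gcongr
        exact ofReal_integral_le_lintegral_ofReal _
    _ = ∫⁻ r in Ioi s, ENNReal.ofReal c * ENNReal.ofReal (fd ((r / s) • y) * r) :=
        (lintegral_const_mul' _ _ ENNReal.ofReal_ne_top).symm
    _ ≤ ∫⁻ r in Ioi s, ENNReal.ofReal s⁻¹ * F ((r / s) • y) :=
        setLIntegral_mono' measurableSet_Ioi hray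
    _ = ENNReal.ofReal s⁻¹ * ∫⁻ r in Ioi s, F ((r / s) • y) :=
        lintegral_const_mul' _ _ ENNReal.ofReal_ne_top

theorem integrable_dot_add_sqrt_mul {fd : ℝ × ℝ → ℝ}
    (hm1 : Integrable fun x : ℝ × ℝ ↦ x.1 * fd x) (hm2 : Integrable fun x : ℝ × ℝ ↦ x.2 * fd x)
    (hμint : Integrable fun x : ℝ × ℝ ↦ √(x.1 ^ 2 + x.2 ^ 2) * fd x) (n : ℝ × ℝ) :
    Integrable fun x : ℝ × ℝ ↦ (x.1 * n.1 + x.2 * n.2 + √(x.1 ^ 2 + x.2 ^ 2)) / 2 * fd x :=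
  ((((hm1.mul_const n.1).add (hm2.mul_const n.2)).add hμint).div_const 2).congr
    (ae_of_all _ fun x ↦ by simp only [Pi.add_apply]; ring)

theorem integral_dot_add_sqrt_mul {fd : ℝ × ℝ → ℝ}
    (hm1 : Integrable fun x : ℝ × ℝ ↦ x.1 * fd x) (hm2 : Integrable fun x : ℝ × ℝ ↦ x.2 * fd x)
    (hμint : Integrable fun x : ℝ × ℝ ↦ √(x.1 ^ 2 + x.2 ^ 2) * fd x) (n : ℝ × ℝ) :
    ∫ x, (x.1 * n.1 + x.2 * n.2 + √(x.1 ^ 2 + x.2 ^ 2)) / 2 * fd x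
      = 1 / 2 * ((∫ x, x.1 * fd x) * n.1 + (∫ x, x.2 * fd x) * n.2)
        + (∫ x, √(x.1 ^ 2 + x.2 ^ 2) * fd x) / 2 := by
  have hmean : Integrable fun x : ℝ × ℝ ↦ x.1 * fd x * n.1 + x.2 * fd x * n.2 :=
    (hm1.mul_const _).add (hm2.mul_const _)
  simp_rw [show ∀ x : ℝ × ℝ, (x.1 * n.1 + x.2 * n.2 + √(x.1 ^ 2 + x.2 ^ 2)) / 2 * fd x
      = (x.1 * fd x * n.1 + x.2 * fd x * n.2 + √(x.1 ^ 2 + x.2 ^ 2) * fd x) / 2 from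
    fun x ↦ by ring]
  rw [integral_div, integral_add hmean hμint, integral_add (hm1.mul_const _) (hm2.mul_const _),
    integral_mul_const, integral_mul_const]
  ring

theorem lintegral_ofReal_dot_mul_le {fd : ℝ × ℝ → ℝ} (hnn : ∀ x, 0 ≤ fd x) {n : ℝ × ℝ}
    (hn : n.1 ^ 2 + n.2 ^ 2 = 1) {g : ℝ × ℝ → ℝ≥0∞}
    (hg : g =ᵐ[volume] fun x ↦ ENNReal.ofReal (fd x)) :
    ∫⁻ x, ENNReal.ofReal (x.1 * n.1 + x.2 * n.2) * g x
      ≤ ∫⁻ x, ENNReal.ofReal ((x.1 * n.1 + x.2 * n.2 + √(x.1 ^ 2 + x.2 ^ 2)) / 2 * fd x) := by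
  refine lintegral_mono_ae ?_
  filter_upwards [hg] with x hx
  rw [hx, ← ENNReal.ofReal_mul' (hnn x)]
  refine ENNReal.ofReal_le_ofReal (mul_le_mul_of_nonneg_right ?_ (hnn x))
  linarith [le_abs_self (x.1 * n.1 + x.2 * n.2), abs_mul_add_mul_le_sqrt hn x]

/-- `f_d(r, θ_y)` is encoded as `fd ((r / |y|) • y)`, with `|y| = √(y.1 ^ 2 + y.2 ^ 2)`. -/
theorem G_dot_n_le_asymmetric_general
    (fd : ℝ × ℝ → ℝ) (hnn : ∀ x, 0 ≤ fd x) (hint : Integrable fd)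
    (μ : ℝ) (hμ : μ = ∫ x, Real.sqrt (x.1 ^ 2 + x.2 ^ 2) * fd x)
    (hμint : Integrable fun x : ℝ × ℝ => Real.sqrt (x.1 ^ 2 + x.2 ^ 2) * fd x)
    (hm1 : Integrable fun x : ℝ × ℝ => x.1 * fd x)
    (hm2 : Integrable fun x : ℝ × ℝ => x.2 * fd x)
    (n : ℝ × ℝ) (hn : n.1 ^ 2 + n.2 ^ 2 = 1)
    (Hhat : Set (ℝ × ℝ)) :
    (∫ y in Hhat, ((y.1 * n.1 + y.2 * n.2) / (y.1 ^ 2 + y.2 ^ 2)) *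
        ∫ r in Set.Ioi (Real.sqrt (y.1 ^ 2 + y.2 ^ 2)),
          fd ((r / Real.sqrt (y.1 ^ 2 + y.2 ^ 2)) • y) * r)
      ≤ (1 / 2) * ((∫ x, x.1 * fd x) * n.1 + (∫ x, x.2 * fd x) * n.2) + μ / 2 := by
  obtain ⟨g, hg, hfd_le_g, hg_ae⟩ := hint.aemeasurable.ennreal_ofReal.exists_measurable_ge_ae_eq
  have hw_nonneg : ∀ x : ℝ × ℝ, 0 ≤ (x.1 * n.1 + x.2 * n.2 + √(x.1 ^ 2 + x.2 ^ 2)) / 2 * fd x :=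
    fun x ↦ mul_nonneg (by linarith [neg_abs_le (x.1 * n.1 + x.2 * n.2),
      abs_mul_add_mul_le_sqrt hn x]) (hnn x)
  set F : ℝ × ℝ → ℝ≥0∞ := fun x ↦ ENNReal.ofReal (x.1 * n.1 + x.2 * n.2) * g x
  have hF : ∀ x, ENNReal.ofReal ((x.1 * n.1 + x.2 * n.2) * fd x) ≤ F x := fun x ↦ by
    rw [ENNReal.ofReal_mul' (hnn x)]; exact mul_le_mul_right (hfd_le_g x) _
  rw [hμ, ← integral_dot_add_sqrt_mul hm1 hm2 hμint n,
    ← ENNReal.ofReal_le_ofReal_iff (integral_nonneg hw_nonneg), ofReal_integral_eq_lintegral_ofReal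
      (integrable_dot_add_sqrt_mul hm1 hm2 hμint n) (ae_of_all _ hw_nonneg)]
  calc _ ≤ ∫⁻ y in Hhat, ENNReal.ofReal (((y.1 * n.1 + y.2 * n.2) / (y.1 ^ 2 + y.2 ^ 2)) *
          ∫ r in Ioi √(y.1 ^ 2 + y.2 ^ 2), fd ((r / √(y.1 ^ 2 + y.2 ^ 2)) • y) * r) :=
        ofReal_integral_le_lintegral_ofReal _
    _ ≤ ∫⁻ y, ENNReal.ofReal (((y.1 * n.1 + y.2 * n.2) / (y.1 ^ 2 + y.2 ^ 2)) *
          ∫ r in Ioi √(y.1 ^ 2 + y.2 ^ 2), fd ((r / √(y.1 ^ 2 + y.2 ^ 2)) • y) * r) :=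
        setLIntegral_le_lintegral _ _
    _ ≤ ∫⁻ y, ENNReal.ofReal (√(y.1 ^ 2 + y.2 ^ 2))⁻¹ *
          ∫⁻ r in Ioi √(y.1 ^ 2 + y.2 ^ 2), F ((r / √(y.1 ^ 2 + y.2 ^ 2)) • y) :=
        lintegral_mono (ofReal_mul_setIntegral_ray_le hnn hF)
    _ = ∫⁻ x, F x :=
        lintegral_inv_sqrt_mul_setLIntegral_ray
          ((ENNReal.measurable_ofReal.comp (by fun_prop)).mul hg)
    _ ≤ _ := lintegral_ofReal_dot_mul_le hnn hn hg_ae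

/-- Bound on the flux density `G(x)·n` of the total dispersal field, without any
symmetry assumption.  For a seed displacement `y` we write `|y| = √(y₁²+y₂²)`
and `f_d(r, θ_y) = fd ((r/|y|) • y)` (the density at radius `r` in the
direction of `y`).  For any measurable set `Hhat` and unit vector `n`,
`∬_{y∈Hhat} (y·n/|y|²) (∫_{|y|}^∞ f_d(r,θ_y) r dr) dA ≤ (1/2) n·E[X_d] + μ/2`. -/
theorem G_dot_n_le_asymmetric
    (fd : ℝ × ℝ → ℝ) (hnn : ∀ x, 0 ≤ fd x) (hint : Integrable fd)
    (hprob : ∫ x, fd x = 1)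
    (μ : ℝ) (hμ : μ = ∫ x, Real.sqrt (x.1 ^ 2 + x.2 ^ 2) * fd x)
    (hμint : Integrable fun x : ℝ × ℝ => Real.sqrt (x.1 ^ 2 + x.2 ^ 2) * fd x)
    (hm1 : Integrable fun x : ℝ × ℝ => x.1 * fd x)
    (hm2 : Integrable fun x : ℝ × ℝ => x.2 * fd x)
    (n : ℝ × ℝ) (hn : n.1 ^ 2 + n.2 ^ 2 = 1)
    (Hhat : Set (ℝ × ℝ)) (hHhat : MeasurableSet Hhat) :
    (∫ y in Hhat, ((y.1 * n.1 + y.2 * n.2) / (y.1 ^ 2 + y.2 ^ 2)) *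
        ∫ r in Set.Ioi (Real.sqrt (y.1 ^ 2 + y.2 ^ 2)),
          fd ((r / Real.sqrt (y.1 ^ 2 + y.2 ^ 2)) • y) * r)
      ≤ (1 / 2) * ((∫ x, x.1 * fd x) * n.1 + (∫ x, x.2 * fd x) * n.2) + μ / 2 :=
  G_dot_n_le_asymmetric_general fd hnn hint μ hμ hμint hm1 hm2 n hn Hhat
end

section
/- Let f_d be a rotationally symmetric probability density on ℝ², i.e. f_d(x) = g(|x|) for some function g, with finite mean dispersal distance μ = ∬ |x| f_d dA = 2π ∫_0^∞ g(r) r² dr. Then for every unit vector n and every measurable set Ĥ ⊂ ℝ², ∬_{y ∈ Ĥ} (y·n / |y|²) (∫_{|y|}^∞ g(r) r dr) dA ≤ μ/π. -/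
/-!
Write `n = (cos φ, sin φ)` and `T(r) = ∫_r^∞ g(s) s ds`. In polar coordinates `y = r (cos θ, sin θ)`
the integrand is `cos (θ - φ) T(r) / r`, and the Jacobian `r` cancels the singularity at the origin.
The integral over `Hhat` is at most the integral of the positive part over the whole plane, which
factors into the angular integral `∫ max (cos (θ - φ)) 0 dθ = 2` and, by Tonelli,
`∫_0^∞ T(r) dr = ∫_0^∞ g(s) s² ds = μ / (2π)`.
-/

open MeasureTheory Real Set
open scoped ENNReal

theorem integral_le_toReal_lintegral_ofReal {α : Type*} [MeasurableSpace α] {μ : Measure α}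
    (f : α → ℝ) : ∫ x, f x ∂μ ≤ (∫⁻ x, ENNReal.ofReal (f x) ∂μ).toReal := by
  by_cases hf : Integrable f μ
  · rw [integral_eq_lintegral_pos_part_sub_lintegral_neg_part hf]
    exact sub_le_self _ ENNReal.toReal_nonneg
  · rw [integral_undef hf]
    exact ENNReal.toReal_nonneg

theorem exists_cos_eq_and_sin_eq {a b : ℝ} (h : a ^ 2 + b ^ 2 = 1) :
    ∃ φ, cos φ = a ∧ sin φ = b := by
  have hz : ‖(⟨a, b⟩ : ℂ)‖ = 1 := by
    rw [Complex.norm_def, Complex.normSq_mk, ← sq, ← sq, h, sqrt_one]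
  refine ⟨Complex.arg ⟨a, b⟩, ?_, ?_⟩
  · simpa [hz] using Complex.norm_mul_cos_arg ⟨a, b⟩
  · simpa [hz] using Complex.norm_mul_sin_arg ⟨a, b⟩

theorem integral_max_cos_zero (t : ℝ) : ∫ θ in t..t + 2 * π, max (cos θ) 0 = 2 := by
  have hcont : Continuous fun θ => max (cos θ) 0 := continuous_cos.max continuous_const
  have hper : Function.Periodic (fun θ => max (cos θ) 0) (2 * π) := fun θ => by
    simp only [cos_add_two_pi]
  have hpos : ∫ θ in -(π / 2)..π / 2, max (cos θ) 0 = 2 := by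
    rw [intervalIntegral.integral_congr (g := cos), integral_cos]
    · norm_num
    · intro θ hθ
      rw [uIcc_of_le (by linarith [pi_pos])] at hθ
      exact max_eq_left (cos_nonneg_of_mem_Icc hθ)
  have hneg : ∫ θ in π / 2..-(π / 2) + 2 * π, max (cos θ) 0 = 0 := by
    rw [intervalIntegral.integral_congr (g := fun _ => 0), intervalIntegral.integral_zero]
    intro θ hθ
    rw [uIcc_of_le (by linarith [pi_pos])] at hθ
    exact max_eq_right (cos_nonpos_of_pi_div_two_le_of_le hθ.1 (by linarith [hθ.2]))
  rw [hper.intervalIntegral_add_eq t (-(π / 2)),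
    ← intervalIntegral.integral_add_adjacent_intervals (b := π / 2)
      (hcont.intervalIntegrable _ _) (hcont.intervalIntegrable _ _), hpos, hneg, add_zero]

theorem lintegral_ofReal_cos_sub (φ : ℝ) :
    ∫⁻ θ in Ioo (-π) π, ENNReal.ofReal (cos (θ - φ)) = 2 := by
  have hcont : Continuous fun θ => max (cos (θ - φ)) 0 :=
    (continuous_cos.comp (continuous_sub_right φ)).max continuous_const
  have hint : IntegrableOn (fun θ => max (cos (θ - φ)) 0) (Ioc (-π) π) :=
    (hcont.intervalIntegrable _ _).1
  calc ∫⁻ θ in Ioo (-π) π, ENNReal.ofReal (cos (θ - φ))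
      = ∫⁻ θ in Ioc (-π) π, ENNReal.ofReal (max (cos (θ - φ)) 0) := by
        simp only [ENNReal.ofReal_max, ENNReal.ofReal_zero, zero_le, max_eq_left]
        exact setLIntegral_congr (Ioo_ae_eq_Ioc (μ := volume))
    _ = ENNReal.ofReal (∫ θ in -π..π, max (cos (θ - φ)) 0) := by
        rw [intervalIntegral.integral_of_le (by linarith [pi_pos]),
          ofReal_integral_eq_lintegral_ofReal hint (.of_forall fun _ => le_max_right _ _)]
    _ = 2 := by
        rw [intervalIntegral.integral_comp_sub_right (fun θ => max (cos θ) 0),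
          show π - φ = -π - φ + 2 * π by ring, integral_max_cos_zero]
        norm_num

theorem lintegral_Ioi_lintegral_Ioi {f : ℝ → ℝ≥0∞}
    (hf : AEMeasurable f (volume.restrict (Ioi 0))) :
    ∫⁻ r in Ioi 0, ∫⁻ s in Ioi r, f s = ∫⁻ s in Ioi 0, ENNReal.ofReal s * f s := by
  have hmeas : AEMeasurable (Function.uncurry fun r s => (Ioi r).indicator f s)
      ((volume.restrict (Ioi 0)).prod (volume.restrict (Ioi 0))) := by
    have : (Function.uncurry fun r s => (Ioi r).indicator f s) =
        {p : ℝ × ℝ | p.1 < p.2}.indicator fun p => f p.2 := by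
      ext ⟨r, s⟩; rfl
    rw [this]
    exact hf.comp_snd.indicator (measurableSet_lt measurable_fst measurable_snd)
  calc ∫⁻ r in Ioi 0, ∫⁻ s in Ioi r, f s
      = ∫⁻ r in Ioi 0, ∫⁻ s in Ioi 0, (Ioi r).indicator f s := by
        refine setLIntegral_congr_fun measurableSet_Ioi fun r hr => ?_
        rw [lintegral_indicator measurableSet_Ioi, Measure.restrict_restrict measurableSet_Ioi,
          Ioi_inter_Ioi, sup_eq_left.2 (le_of_lt hr)]
    _ = ∫⁻ s in Ioi 0, ∫⁻ r in Ioi 0, (Ioi r).indicator f s := lintegral_lintegral_swap hmeas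
    _ = ∫⁻ s in Ioi 0, ENNReal.ofReal s * f s := by
        refine setLIntegral_congr_fun measurableSet_Ioi fun s hs => ?_
        have : (fun r => (Ioi r).indicator f s) = (Iio s).indicator fun _ => f s := by
          ext r; simp only [indicator, mem_Ioi, mem_Iio]
        rw [this, lintegral_indicator_const measurableSet_Iio,
          Measure.restrict_apply measurableSet_Iio, Iio_inter_Ioi, volume_Ioo, sub_zero, mul_comm]

noncomputable def fluxDensity (g : ℝ → ℝ) (n y : ℝ × ℝ) : ℝ :=
  (y.1 * n.1 + y.2 * n.2) / (y.1 ^ 2 + y.2 ^ 2) *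
    ∫ r in Ioi (√(y.1 ^ 2 + y.2 ^ 2)), g r * r

theorem fluxDensity_polarCoord_symm (g : ℝ → ℝ) (n : ℝ × ℝ) {r : ℝ} (hr : 0 < r) (θ : ℝ) :
    fluxDensity g n (polarCoord.symm (r, θ)) =
      (n.1 * cos θ + n.2 * sin θ) / r * ∫ s in Ioi r, g s * s := by
  have hsq : (r * cos θ) ^ 2 + (r * sin θ) ^ 2 = r ^ 2 := by
    linear_combination r ^ 2 * sin_sq_add_cos_sq θ
  simp only [fluxDensity, polarCoord_symm_apply, hsq, sqrt_sq hr.le]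
  congr 1
  field_simp

theorem lintegral_ofReal_fluxDensity {g : ℝ → ℝ} (hg : ∀ r, 0 ≤ g r)
    (hint1 : IntegrableOn (fun r => g r * r) (Ioi 0))
    (hint2 : IntegrableOn (fun r => g r * r ^ 2) (Ioi 0))
    {n : ℝ × ℝ} (hn : n.1 ^ 2 + n.2 ^ 2 = 1) :
    ∫⁻ y, ENNReal.ofReal (fluxDensity g n y) =
      ENNReal.ofReal (2 * ∫ r in Ioi 0, g r * r ^ 2) := by
  obtain ⟨φ, hcos, hsin⟩ := exists_cos_eq_and_sin_eq hn
  set tail : ℝ → ℝ≥0∞ := fun r => ∫⁻ s in Ioi r, ENNReal.ofReal (g s * s)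
  have htail : Measurable tail := Antitone.measurable fun a b hab =>
    lintegral_mono_set (Ioi_subset_Ioi hab)
  have hangle : Measurable fun θ => ENNReal.ofReal (cos (θ - φ)) := by fun_prop
  have hpolar : ∀ p ∈ polarCoord.target, ENNReal.ofReal p.1 * ENNReal.ofReal
      (fluxDensity g n (polarCoord.symm p)) = tail p.1 * ENNReal.ofReal (cos (p.2 - φ)) := by
    rintro ⟨r, θ⟩ ⟨hr, -⟩
    have hr : 0 < r := hr
    have hint : IntegrableOn (fun s => g s * s) (Ioi r) := hint1.mono_set (Ioi_subset_Ioi hr.le)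
    have hnonneg : 0 ≤ᵐ[volume.restrict (Ioi r)] fun s => g s * s :=
      ae_restrict_of_forall_mem measurableSet_Ioi fun s hs =>
        mul_nonneg (hg s) (hr.trans hs).le
    rw [fluxDensity_polarCoord_symm g n hr, ← ENNReal.ofReal_mul hr.le,
      show r * ((n.1 * cos θ + n.2 * sin θ) / r * ∫ s in Ioi r, g s * s) =
        (∫ s in Ioi r, g s * s) * cos (θ - φ) by
          rw [cos_sub, hcos, hsin]; field_simp,
      ENNReal.ofReal_mul (integral_nonneg_of_ae hnonneg),
      ofReal_integral_eq_lintegral_ofReal hint hnonneg]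
  have hmoment : ∫⁻ s in Ioi 0, ENNReal.ofReal s * ENNReal.ofReal (g s * s) =
      ENNReal.ofReal (∫ r in Ioi 0, g r * r ^ 2) := by
    rw [ofReal_integral_eq_lintegral_ofReal hint2
      (.of_forall fun r => mul_nonneg (hg r) (sq_nonneg r))]
    refine setLIntegral_congr_fun measurableSet_Ioi fun s hs => ?_
    rw [← ENNReal.ofReal_mul (le_of_lt hs)]
    ring_nf
  calc ∫⁻ y, ENNReal.ofReal (fluxDensity g n y)
      = ∫⁻ p in polarCoord.target, ENNReal.ofReal p.1 *
          ENNReal.ofReal (fluxDensity g n (polarCoord.symm p)) :=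
        (lintegral_comp_polarCoord_symm _).symm
    _ = ∫⁻ p in Ioi 0 ×ˢ Ioo (-π) π, tail p.1 * ENNReal.ofReal (cos (p.2 - φ)) :=
        setLIntegral_congr_fun polarCoord.open_target.measurableSet hpolar
    _ = (∫⁻ r in Ioi 0, tail r) * ∫⁻ θ in Ioo (-π) π, ENNReal.ofReal (cos (θ - φ)) := by
        rw [Measure.volume_eq_prod, ← Measure.prod_restrict]
        exact lintegral_prod_mul htail.aemeasurable hangle.aemeasurable
    _ = ENNReal.ofReal (2 * ∫ r in Ioi 0, g r * r ^ 2) := by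
        rw [lintegral_Ioi_lintegral_Ioi hint1.aemeasurable.ennreal_ofReal, hmoment,
          lintegral_ofReal_cos_sub, ENNReal.ofReal_mul zero_le_two, ENNReal.ofReal_ofNat, mul_comm]

theorem G_dot_n_le_symmetric_general
    (g : ℝ → ℝ) (hg : ∀ r, 0 ≤ g r)
    (hint1 : IntegrableOn (fun r => g r * r) (Set.Ioi (0 : ℝ)))
    (μ : ℝ) (hμ : μ = 2 * Real.pi * ∫ r in Set.Ioi (0 : ℝ), g r * r ^ 2)
    (hint2 : IntegrableOn (fun r => g r * r ^ 2) (Set.Ioi (0 : ℝ)))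
    (n : ℝ × ℝ) (hn : n.1 ^ 2 + n.2 ^ 2 = 1)
    (Hhat : Set (ℝ × ℝ)) :
    (∫ y in Hhat, ((y.1 * n.1 + y.2 * n.2) / (y.1 ^ 2 + y.2 ^ 2)) *
        ∫ r in Set.Ioi (Real.sqrt (y.1 ^ 2 + y.2 ^ 2)), g r * r)
      ≤ μ / Real.pi := by
  have hμ_nonneg : 0 ≤ μ / π := by
    rw [hμ]
    have : 0 ≤ ∫ r in Ioi 0, g r * r ^ 2 :=
      setIntegral_nonneg measurableSet_Ioi fun r _ => mul_nonneg (hg r) (sq_nonneg r)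
    positivity
  have htotal : ∫⁻ y, ENNReal.ofReal (fluxDensity g n y) = ENNReal.ofReal (μ / π) := by
    rw [lintegral_ofReal_fluxDensity hg hint1 hint2 hn, hμ, mul_right_comm, mul_div_cancel_right₀ _ pi_ne_zero]
  calc ∫ y in Hhat, fluxDensity g n y
      ≤ (∫⁻ y in Hhat, ENNReal.ofReal (fluxDensity g n y)).toReal :=
        integral_le_toReal_lintegral_ofReal _
    _ ≤ (∫⁻ y, ENNReal.ofReal (fluxDensity g n y)).toReal :=
        ENNReal.toReal_mono (htotal ▸ ENNReal.ofReal_ne_top) (setLIntegral_le_lintegral _ _)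
    _ = μ / π := by rw [htotal, ENNReal.toReal_ofReal hμ_nonneg]

/-- Bound on the flux density `G(x)·n` of the total dispersal field for a
rotationally symmetric dispersal kernel `fd x = g ‖x‖` with radial profile `g`.
For any measurable set `Hhat` and unit vector `n`,
`∬_{y∈Hhat} (y·n/|y|²) (∫_{|y|}^∞ g(r) r dr) dA ≤ μ/π`. -/
theorem G_dot_n_le_symmetric
    (g : ℝ → ℝ) (hg : ∀ r, 0 ≤ g r)
    (hnorm : 2 * Real.pi * ∫ r in Set.Ioi (0 : ℝ), g r * r = 1)
    (hint1 : IntegrableOn (fun r => g r * r) (Set.Ioi (0 : ℝ)))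
    (μ : ℝ) (hμ : μ = 2 * Real.pi * ∫ r in Set.Ioi (0 : ℝ), g r * r ^ 2)
    (hint2 : IntegrableOn (fun r => g r * r ^ 2) (Set.Ioi (0 : ℝ)))
    (n : ℝ × ℝ) (hn : n.1 ^ 2 + n.2 ^ 2 = 1)
    (Hhat : Set (ℝ × ℝ)) (hHhat : MeasurableSet Hhat) :
    (∫ y in Hhat, ((y.1 * n.1 + y.2 * n.2) / (y.1 ^ 2 + y.2 ^ 2)) *
        ∫ r in Set.Ioi (Real.sqrt (y.1 ^ 2 + y.2 ^ 2)), g r * r)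
      ≤ μ / Real.pi :=
  G_dot_n_le_symmetric_general g hg hint1 μ hμ hint2 n hn Hhat
end

section
/- Let H ⊂ ℝ² be a bounded open region with C¹ boundary of finite perimeter L and area A, and let f_d be a probability density on ℝ² with mean dispersal distance μ. If X_p is uniform on H and X_d ~ f_d is independent of X_p, then P(X_p + X_d ∉ H) ≤ μL/(2A). -/
/-!
A displacement `y` carries the part `H \ (H - y)` of the habitat out of `H` and carries the part
`(H - y) \ H` of its complement into `H`; by translation invariance these two pieces have the
same area. A segment from a point of either piece to its translate by `y` crosses `∂H`, so both
pieces lie in the set swept by the boundary curve translated along `[0, -y]`. By the area formula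
for `(s, t) ↦ γ s - t • y`, whose Jacobian `|γ' s × y|` is at most `‖y‖`, that set has area at
most `L ‖y‖`. Hence `area (H \ (H - y)) ≤ L ‖y‖ / 2`, and averaging over the dispersal density
gives `P(X_p + X_d ∉ H) ≤ μ L / (2 A)`.
-/

open MeasureTheory ProbabilityTheory Set
open scoped symmDiff Pointwise

local notation "ℝ²" => EuclideanSpace ℝ (Fin 2)

section Crossing

variable {E : Type*} [AddCommGroup E] [Module ℝ E] [TopologicalSpace E]
  [IsTopologicalAddGroup E] [ContinuousSMul ℝ E]

theorem exists_add_smul_mem_frontier {s : Set E} {x y : E} (hx : x ∈ s) (hy : x + y ∉ s) :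
    ∃ t ∈ Icc (0 : ℝ) 1, x + t • y ∈ frontier s := by
  let f : unitInterval → E := fun t => x + (t : ℝ) • y
  have hf : Continuous f := by fun_prop
  have hne : (f ⁻¹' s).Nonempty := ⟨0, by simpa [f] using hx⟩
  have hne_univ : f ⁻¹' s ≠ univ := fun h => hy <| by
    simpa [f] using (h ▸ mem_univ 1 : (1 : unitInterval) ∈ f ⁻¹' s)
  obtain ⟨t, ht⟩ := nonempty_frontier_iff.2 ⟨hne, hne_univ⟩
  exact ⟨t, t.2, hf.frontier_preimage_subset s ht⟩

theorem symmDiff_preimage_add_subset_frontier_sub_segment (s : Set E) (y : E) :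
    s ∆ ((· + y) ⁻¹' s) ⊆ frontier s - segment ℝ 0 y := by
  have hcross : ∀ {u : Set E} {x}, x ∈ u → x + y ∉ u → x ∈ frontier u - segment ℝ 0 y := by
    intro u x hx hy
    obtain ⟨t, ht, hfr⟩ := exists_add_smul_mem_frontier hx hy
    refine ⟨x + t • y, hfr, t • y, ?_, add_sub_cancel_right x _⟩
    rw [segment_eq_image']
    exact ⟨t, ht, by simp⟩
  rintro x (⟨hx, hy⟩ | ⟨hy, hx⟩)
  · exact hcross hx hy
  · simpa only [frontier_compl] using hcross (u := sᶜ) hx (not_not.2 hy)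

end Crossing

theorem two_mul_measure_sdiff_preimage_add {G : Type*} [MeasurableSpace G] [AddGroup G]
    [MeasurableAdd G] (μ : Measure G) [μ.IsAddRightInvariant] {s : Set G}
    (hs : MeasurableSet s) (hμs : μ s ≠ ⊤) (y : G) :
    2 * μ (s \ ((· + y) ⁻¹' s)) = μ (s ∆ ((· + y) ⁻¹' s)) := by
  have hst : MeasurableSet ((· + y) ⁻¹' s) := measurable_add_const y hs
  rw [measure_symmDiff_eq hs.nullMeasurableSet hst.nullMeasurableSet,
    ← measure_sdiff_symm hs.nullMeasurableSet hst.nullMeasurableSet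
      (measure_preimage_add_right μ y s).symm (measure_ne_top_of_subset inter_subset_left hμs),
    two_mul]

theorem abs_cross_le_norm_mul_norm (u w : ℝ²) : |u 0 * w 1 - w 0 * u 1| ≤ ‖u‖ * ‖w‖ := by
  refine abs_le_of_sq_le_sq ?_ (by positivity)
  simp only [mul_pow, EuclideanSpace.real_norm_sq_eq, Fin.sum_univ_two]
  nlinarith [sq_nonneg (u 0 * w 0 + u 1 * w 1)]

theorem det_proj_smulRight_add (u w : ℝ²) :
    LinearMap.det ((EuclideanSpace.proj 0 : ℝ² →L[ℝ] ℝ).smulRight u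
      + (EuclideanSpace.proj 1 : ℝ² →L[ℝ] ℝ).smulRight w : ℝ² →L[ℝ] ℝ²).toLinearMap
      = u 0 * w 1 - w 0 * u 1 := by
  rw [← LinearMap.det_toMatrix (PiLp.basisFun 2 ℝ (Fin 2)), Matrix.det_fin_two]
  simp [LinearMap.toMatrix_apply]

theorem hasFDerivAt_comp_proj_add_smul {F : Type*} [NormedAddCommGroup F] [NormedSpace ℝ F]
    {γ : ℝ → F} {v : ℝ²} (hγ : DifferentiableAt ℝ γ (v 0)) (w : F) :
    HasFDerivAt (fun v : ℝ² => γ (v 0) + v 1 • w)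
      ((EuclideanSpace.proj 0 : ℝ² →L[ℝ] ℝ).smulRight (deriv γ (v 0))
        + (EuclideanSpace.proj 1 : ℝ² →L[ℝ] ℝ).smulRight w) v := by
  have hγv := hγ.hasDerivAt.hasFDerivAt.comp v (EuclideanSpace.proj 0 : ℝ² →L[ℝ] ℝ).hasFDerivAt
  exact (hγv.congr_fderiv (by ext; simp)).add
    ((EuclideanSpace.proj 1 : ℝ² →L[ℝ] ℝ).smulRight w).hasFDerivAt

theorem volume_image_sub_segment_le {γ : ℝ → ℝ²} (hγ : Differentiable ℝ γ)
    (hγ' : ∀ s, ‖deriv γ s‖ ≤ 1) (L : ℝ) (y : ℝ²) :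
    volume (γ '' Icc 0 L - segment ℝ 0 y) ≤ ENNReal.ofReal (L * ‖y‖) := by
  let B : Set (Fin 2 → ℝ) := univ.pi ![Icc 0 L, Icc 0 1]
  let K : Set ℝ² := (MeasurableEquiv.toLp 2 (Fin 2 → ℝ)).symm ⁻¹' B
  have hB : MeasurableSet B :=
    MeasurableSet.univ_pi fun i => by fin_cases i <;> exact measurableSet_Icc
  have hK : MeasurableSet K := (MeasurableEquiv.toLp 2 (Fin 2 → ℝ)).symm.measurable hB
  have hKvol : volume K = ENNReal.ofReal L := by
    rw [(EuclideanSpace.volume_preserving_symm_measurableEquiv_toLp (Fin 2)).measure_preimage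
      hB.nullMeasurableSet, volume_pi_pi]
    simp
  let Ψ : ℝ² → ℝ² := fun v => γ (v 0) + v 1 • -y
  let Ψ' : ℝ² → ℝ² →L[ℝ] ℝ² := fun v => (EuclideanSpace.proj 0 : ℝ² →L[ℝ] ℝ).smulRight
      (deriv γ (v 0)) + (EuclideanSpace.proj 1 : ℝ² →L[ℝ] ℝ).smulRight (-y)
  have hsub : γ '' Icc 0 L - segment ℝ 0 y ⊆ Ψ '' K := by
    rintro _ ⟨_, ⟨s, hs, rfl⟩, _, hb, rfl⟩
    rw [segment_eq_image'] at hb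
    obtain ⟨t, ht, rfl⟩ := hb
    refine ⟨!₂[s, t], ?_, ?_⟩
    · simp [K, B, Fin.forall_fin_two, hs, ht]
    · simp [Ψ, sub_eq_add_neg]
  have hΨ : ∀ v ∈ K, HasFDerivWithinAt Ψ (Ψ' v) K v := fun v _ =>
    (hasFDerivAt_comp_proj_add_smul (hγ (v 0)) (-y)).hasFDerivWithinAt
  have hdet : ∀ v, |(Ψ' v).det| ≤ ‖y‖ := fun v => by
    rw [ContinuousLinearMap.det, det_proj_smulRight_add]
    simpa using (abs_cross_le_norm_mul_norm (deriv γ (v 0)) (-y)).trans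
      (mul_le_of_le_one_left (norm_nonneg _) (hγ' _))
  calc volume (γ '' Icc 0 L - segment ℝ 0 y)
      ≤ volume (Ψ '' K) := measure_mono hsub
    _ ≤ ∫⁻ v in K, ENNReal.ofReal |(Ψ' v).det| :=
      addHaar_image_le_lintegral_abs_det_fderiv volume hK hΨ
    _ ≤ ∫⁻ _ in K, ENNReal.ofReal ‖y‖ :=
      lintegral_mono fun v => ENNReal.ofReal_le_ofReal (hdet v)
    _ = ENNReal.ofReal (L * ‖y‖) := by
      rw [setLIntegral_const, hKvol, ← ENNReal.ofReal_mul (norm_nonneg y), mul_comm]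

theorem volume_sdiff_preimage_add_le {H : Set ℝ²} (hH : MeasurableSet H)
    (hHfin : volume H ≠ ⊤) {γ : ℝ → ℝ²} (hγ : Differentiable ℝ γ)
    (hγ' : ∀ s, ‖deriv γ s‖ ≤ 1) {L : ℝ} (hbd : frontier H = γ '' Icc 0 L) (y : ℝ²) :
    volume (H \ ((· + y) ⁻¹' H)) ≤ ENNReal.ofReal (L * ‖y‖ / 2) := by
  have htwice : 2 * volume (H \ ((· + y) ⁻¹' H)) ≤ ENNReal.ofReal (L * ‖y‖) := by
    rw [two_mul_measure_sdiff_preimage_add volume hH hHfin y]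
    calc volume (H ∆ ((· + y) ⁻¹' H))
        ≤ volume (frontier H - segment ℝ 0 y) :=
          measure_mono (symmDiff_preimage_add_subset_frontier_sub_segment H y)
      _ ≤ ENNReal.ofReal (L * ‖y‖) := hbd ▸ volume_image_sub_segment_le hγ hγ' L y
  rw [ENNReal.ofReal_div_of_pos two_pos, ENNReal.ofReal_ofNat,
    ENNReal.le_div_iff_mul_le (.inl two_ne_zero) (.inl ENNReal.ofNat_ne_top), mul_comm]
  exact htwice

theorem MeasureTheory.Measure.conv_apply_eq_lintegral {G : Type*} [AddMonoid G] [MeasurableSpace G]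
    [MeasurableAdd₂ G] (μ ν : Measure G) [SFinite μ] [SFinite ν] {s : Set G}
    (hs : MeasurableSet s) : (μ ∗ ν) s = ∫⁻ y, μ ((· + y) ⁻¹' s) ∂ν := by
  rw [Measure.conv, Measure.map_apply measurable_add hs,
    Measure.prod_apply_symm (measurable_add hs)]
  rfl

theorem withDensity_ofReal_indicator_const_apply {α : Type*} [MeasurableSpace α]
    (μ : Measure α) {s t : Set α} (hs : MeasurableSet s) (ht : MeasurableSet t) (c : ℝ) :
    μ.withDensity (fun x => ENNReal.ofReal (s.indicator (fun _ => c) x)) t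
      = ENNReal.ofReal c * μ (t ∩ s) := by
  have hind : (fun x => ENNReal.ofReal (s.indicator (fun _ => c) x))
      = s.indicator fun _ => ENNReal.ofReal c := by
    ext x; by_cases hx : x ∈ s <;> simp [hx]
  rw [hind, withDensity_indicator hs, withDensity_const, Measure.smul_apply,
    Measure.restrict_apply ht, smul_eq_mul]

theorem lintegral_ofReal_withDensity_ofReal {α : Type*} [MeasurableSpace α] {μ : Measure α}
    {f g : α → ℝ} (hf : AEMeasurable f μ) (hf0 : ∀ x, 0 ≤ f x) (hg : AEMeasurable g μ)
    (hg0 : ∀ x, 0 ≤ g x) (hgf : Integrable (fun x => g x * f x) μ) :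
    ∫⁻ x, ENNReal.ofReal (g x) ∂μ.withDensity (fun x => ENNReal.ofReal (f x))
      = ENNReal.ofReal (∫ x, g x * f x ∂μ) := by
  rw [lintegral_withDensity_eq_lintegral_mul₀ hf.ennreal_ofReal hg.ennreal_ofReal,
    ofReal_integral_eq_lintegral_ofReal hgf (.of_forall fun x => mul_nonneg (hg0 x) (hf0 x))]
  refine lintegral_congr fun x => ?_
  simp only [Pi.mul_apply, ← ENNReal.ofReal_mul (hf0 x), mul_comm]

theorem withDensity_indicator_preimage_add_compl_le {H : Set ℝ²} (hH : MeasurableSet H)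
    (hHfin : volume H ≠ ⊤) {γ : ℝ → ℝ²} (hγ : Differentiable ℝ γ)
    (hγ' : ∀ s, ‖deriv γ s‖ ≤ 1) {L : ℝ} (hL : 0 ≤ L) (hbd : frontier H = γ '' Icc 0 L) {c : ℝ}
    (hc : 0 ≤ c) (y : ℝ²) :
    volume.withDensity (fun x => ENNReal.ofReal (H.indicator (fun _ => c) x)) ((· + y) ⁻¹' Hᶜ)
      ≤ ENNReal.ofReal (c * L / 2) * ENNReal.ofReal ‖y‖ := by
  rw [withDensity_ofReal_indicator_const_apply _ hH (measurable_add_const y hH.compl),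
    preimage_compl, inter_comm, ← sdiff_eq]
  calc ENNReal.ofReal c * volume (H \ ((· + y) ⁻¹' H))
      ≤ ENNReal.ofReal c * ENNReal.ofReal (L * ‖y‖ / 2) := by
        gcongr
        exact volume_sdiff_preimage_add_le hH hHfin hγ hγ' hbd y
    _ = ENNReal.ofReal (c * L / 2) * ENNReal.ofReal ‖y‖ := by
        rw [← ENNReal.ofReal_mul hc, ← ENNReal.ofReal_mul (by positivity)]
        ring_nf

theorem seed_loss_le_muL_div_2A_general
    {Ω : Type*} [MeasureSpace Ω]
    (Xp Xd : Ω → EuclideanSpace ℝ (Fin 2)) (hXp : Measurable Xp) (hXd : Measurable Xd)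
    (H : Set (EuclideanSpace ℝ (Fin 2))) (hHopen : IsOpen H)
    (hHbdd : Bornology.IsBounded H)
    (A : ℝ) (hA : A = (volume H).toReal)
    (L : ℝ) (hLpos : 0 < L)
    (γ : ℝ → EuclideanSpace ℝ (Fin 2)) (hγC1 : ContDiff ℝ 1 γ)
    (hγunit : ∀ t, ‖deriv γ t‖ = 1)
    (hγbd : frontier H = γ '' Set.Icc 0 L)
    (fd : EuclideanSpace ℝ (Fin 2) → ℝ) (hnn : ∀ x, 0 ≤ fd x)
    (hint : Integrable fd)
    (μ : ℝ) (hμ : μ = ∫ x, ‖x‖ * fd x)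
    (hμint : Integrable fun x : EuclideanSpace ℝ (Fin 2) => ‖x‖ * fd x)
    (hindep : IndepFun Xp Xd ℙ)
    (hmapXp : Measure.map Xp ℙ
      = volume.withDensity fun x => ENNReal.ofReal (H.indicator (fun _ => 1 / A) x))
    (hmapXd : Measure.map Xd ℙ
      = volume.withDensity fun x => ENNReal.ofReal (fd x)) :
    (ℙ {ω | Xp ω + Xd ω ∉ H}).toReal ≤ μ * L / (2 * A) := by
  have hH : MeasurableSet H := hHopen.measurableSet
  have hA0 : 0 ≤ A := hA ▸ ENNReal.toReal_nonneg
  have hμ0 : 0 ≤ μ := hμ ▸ integral_nonneg fun x => mul_nonneg (norm_nonneg x) (hnn x)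
  have hσp : SigmaFinite (Measure.map Xp ℙ) := hmapXp ▸ inferInstance
  have hσd : SigmaFinite (Measure.map Xd ℙ) := hmapXd ▸ inferInstance
  refine ENNReal.toReal_le_of_le_ofReal (by positivity) ?_
  calc ℙ {ω | Xp ω + Xd ω ∉ H}
      = (Measure.map Xp ℙ ∗ Measure.map Xd ℙ) Hᶜ := by
        rw [← hindep.map_add_eq_map_conv_map' hXp hXd hσp hσd,
          Measure.map_apply (hXp.add hXd) hH.compl]
        rfl
    _ = ∫⁻ y, Measure.map Xp ℙ ((· + y) ⁻¹' Hᶜ) ∂Measure.map Xd ℙ :=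
        Measure.conv_apply_eq_lintegral _ _ hH.compl
    _ ≤ ∫⁻ y, ENNReal.ofReal (1 / A * L / 2) * ENNReal.ofReal ‖y‖ ∂Measure.map Xd ℙ :=
        lintegral_mono fun y => hmapXp ▸ withDensity_indicator_preimage_add_compl_le hH
          hHbdd.measure_lt_top.ne (hγC1.differentiable one_ne_zero) (fun s => (hγunit s).le)
          hLpos.le hγbd (by positivity) y
    _ = ENNReal.ofReal (1 / A * L / 2) * ENNReal.ofReal μ := by
        rw [lintegral_const_mul _ measurable_norm.ennreal_ofReal, hmapXd, hμ,
          lintegral_ofReal_withDensity_ofReal hint.aemeasurable hnn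
            measurable_norm.aemeasurable norm_nonneg hμint]
    _ = ENNReal.ofReal (μ * L / (2 * A)) := by
        rw [← ENNReal.ofReal_mul (by positivity)]
        ring_nf

/-- Main seed-loss bound, asymmetric case.  `H` is a bounded open habitat in the
Euclidean plane whose boundary is a simple closed `C¹` curve `γ`, parametrized
by arc length with period (perimeter) `L`; the habitat area is `A`.  `Xp` is
uniformly distributed on `H` and `Xd` is an independent random displacement
with density `fd` of mean dispersal distance `μ`.  Then the probability that
`Xp + Xd` lands outside `H` is at most `μ L / (2 A)`. -/
theorem seed_loss_le_muL_div_2A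
    {Ω : Type*} [MeasureSpace Ω] [IsProbabilityMeasure (ℙ : Measure Ω)]
    (Xp Xd : Ω → EuclideanSpace ℝ (Fin 2)) (hXp : Measurable Xp) (hXd : Measurable Xd)
    (H : Set (EuclideanSpace ℝ (Fin 2))) (hHopen : IsOpen H)
    (hHbdd : Bornology.IsBounded H)
    (A : ℝ) (hA : A = (volume H).toReal) (hApos : 0 < A)
    (L : ℝ) (hLpos : 0 < L)
    (γ : ℝ → EuclideanSpace ℝ (Fin 2)) (hγC1 : ContDiff ℝ 1 γ)
    (hγper : Function.Periodic γ L)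
    (hγunit : ∀ t, ‖deriv γ t‖ = 1)
    (hγinj : Set.InjOn γ (Set.Ico 0 L))
    (hγbd : frontier H = γ '' Set.Icc 0 L)
    (fd : EuclideanSpace ℝ (Fin 2) → ℝ) (hnn : ∀ x, 0 ≤ fd x)
    (hint : Integrable fd) (hprob : ∫ x, fd x = 1)
    (μ : ℝ) (hμ : μ = ∫ x, ‖x‖ * fd x)
    (hμint : Integrable fun x : EuclideanSpace ℝ (Fin 2) => ‖x‖ * fd x)
    (hindep : IndepFun Xp Xd ℙ)
    (hmapXp : Measure.map Xp ℙ
      = volume.withDensity fun x => ENNReal.ofReal (H.indicator (fun _ => 1 / A) x))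
    (hmapXd : Measure.map Xd ℙ
      = volume.withDensity fun x => ENNReal.ofReal (fd x)) :
    (ℙ {ω | Xp ω + Xd ω ∉ H}).toReal ≤ μ * L / (2 * A) :=
  seed_loss_le_muL_div_2A_general Xp Xd hXp hXd H hHopen hHbdd A hA L hLpos γ hγC1 hγunit hγbd fd
    hnn hint μ hμ hμint hindep hmapXp hmapXd
end

section
/- Let H = (0,A)×(0,B) be a rectangle (A, B > 0) and let f_d be the uniform density 1/(ab) on (0,a)×(0,b) with 0 < a < A and 0 < b < B. Then the quantity pA := ∬_{x_p∈H} ∬_{x∈Hᶜ} f_d(x−x_p) dA dA satisfies pA ≥ aB/2. -/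
open MeasureTheory Real Set

/-!
Seeds released from `xp` land uniformly in the box `xp + (0,a) × (0,b)`. When `xp` lies in the
strip `T = (A - a, A) × (0, B)` along the right edge of `H`, the part of that box beyond the line
`x₁ = A` has width `xp₁ - (A - a)`, so a fraction `(xp₁ - (A - a)) / a` of the seeds leaves
`H`. Integrating this fraction over `T` already gives `a * B / 2`; the rest of `H` contributes
nonnegatively.
-/

namespace MeasureTheory

variable {G E : Type*} [MeasurableSpace G] [AddGroup G] {μ : Measure G}
  [NormedAddCommGroup E] [NormedSpace ℝ E]

theorem setIntegral_comp_sub_right_le_integral [MeasurableAdd G] [μ.IsAddRightInvariant]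
    {f : G → ℝ} (hf : Integrable f μ) (hf0 : ∀ x, 0 ≤ f x) (s : Set G) (y : G) :
    ∫ x in s, f (x - y) ∂μ ≤ ∫ x, f x ∂μ :=
  (setIntegral_le_integral (hf.comp_sub_right y) (.of_forall fun _ => hf0 _)).trans_eq
    (integral_sub_right_eq_self f y)

theorem StronglyMeasurable.setIntegral_comp_sub_right [MeasurableSub₂ G] [SFinite μ]
    {f : G → E} (hf : StronglyMeasurable f) {s : Set G} (hs : MeasurableSet s) :
    StronglyMeasurable fun y => ∫ x in s, f (x - y) ∂μ := by
  simp_rw [← integral_indicator hs]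
  exact ((hf.comp_measurable (measurable_snd.sub measurable_fst)).indicator
    (hs.preimage measurable_snd)).integral_prod_right'

theorem Integrable.integrableOn_setIntegral_comp_sub_right [MeasurableAdd G] [MeasurableSub₂ G]
    [μ.IsAddRightInvariant] [SFinite μ] {f : G → E} (hf : Integrable f μ)
    (hfm : StronglyMeasurable f) {s : Set G} (hs : MeasurableSet s) {ν : Measure G} {t : Set G}
    (ht : ν t ≠ ⊤) :
    IntegrableOn (fun y => ∫ x in s, f (x - y) ∂μ) t ν :=
  Measure.integrableOn_of_bounded ht (hfm.setIntegral_comp_sub_right hs).aestronglyMeasurable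
    (M := ∫ x, ‖f x‖ ∂μ) <| .of_forall fun y =>
      (norm_integral_le_integral_norm _).trans <|
        setIntegral_comp_sub_right_le_integral hf.norm (fun _ => norm_nonneg _) s y

end MeasureTheory

noncomputable def uniformDensity (a b : ℝ) : ℝ × ℝ → ℝ :=
  (Ioo 0 a ×ˢ Ioo 0 b).indicator fun _ => 1 / (a * b)

section UniformDensity

variable {a b : ℝ}

theorem uniformDensity_nonneg (ha : 0 ≤ a) (hb : 0 ≤ b) (x : ℝ × ℝ) :
    0 ≤ uniformDensity a b x :=
  indicator_nonneg (fun _ _ => by positivity) x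

theorem stronglyMeasurable_uniformDensity (a b : ℝ) : StronglyMeasurable (uniformDensity a b) :=
  stronglyMeasurable_const.indicator (measurableSet_Ioo.prod measurableSet_Ioo)

theorem integrable_uniformDensity (a b : ℝ) : Integrable (uniformDensity a b) :=
  (integrable_indicator_iff (measurableSet_Ioo.prod measurableSet_Ioo)).2 <|
    integrableOn_const <|
      ((Metric.isBounded_Ioo 0 a).prod (Metric.isBounded_Ioo 0 b)).measure_lt_top.ne

theorem div_le_setIntegral_uniformDensity_comp_sub (ha : 0 < a) (hb : 0 < b) {c : ℝ}
    (hc : 0 ≤ c) (hca : c ≤ a) (y : ℝ × ℝ) {s : Set (ℝ × ℝ)}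
    (hs : Ioo (y.1 + a - c) (y.1 + a) ×ˢ Ioo y.2 (y.2 + b) ⊆ s) :
    c / a ≤ ∫ x in s, uniformDensity a b (x - y) := by
  set S := Ioo (y.1 + a - c) (y.1 + a) ×ˢ Ioo y.2 (y.2 + b)
  have hS : MeasurableSet S := measurableSet_Ioo.prod measurableSet_Ioo
  have hconst : EqOn (fun x => uniformDensity a b (x - y)) (fun _ => 1 / (a * b)) S := by
    rintro x ⟨⟨h₁, h₂⟩, h₃, h₄⟩
    refine indicator_of_mem (s := Ioo 0 a ×ˢ Ioo 0 b) ⟨⟨?_, ?_⟩, ?_, ?_⟩ _ <;>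
      simp only [Prod.fst_sub, Prod.snd_sub] <;> linarith
  calc c / a = ∫ x in S, uniformDensity a b (x - y) := by
        rw [setIntegral_congr_fun hS hconst, setIntegral_const, Measure.volume_eq_prod,
          measureReal_prod_prod, volume_real_Ioo_of_le (by linarith),
          volume_real_Ioo_of_le (by linarith), smul_eq_mul]
        field_simp
        ring
    _ ≤ ∫ x in s, uniformDensity a b (x - y) :=
        setIntegral_mono_set ((integrable_uniformDensity a b).comp_sub_right y).integrableOn
          (.of_forall fun _ => uniformDensity_nonneg ha.le hb.le _) hs.eventuallyLE

end UniformDensity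

theorem setIntegral_Ioo_prod_Ioo_fst_sub {p q r s : ℝ} (hpq : p ≤ q) (hrs : r ≤ s) :
    ∫ z in Ioo p q ×ˢ Ioo r s, (z.1 - p) = (q - p) ^ 2 / 2 * (s - r) := by
  have := setIntegral_prod_mul (μ := volume) (ν := volume) (fun x => x - p) (fun _ => (1 : ℝ))
    (Ioo p q) (Ioo r s)
  simp only [mul_one] at this
  rw [Measure.volume_eq_prod, this, ← integral_Ioc_eq_integral_Ioo,
    ← intervalIntegral.integral_of_le hpq, intervalIntegral.integral_comp_sub_right (fun x => x),
    integral_id, setIntegral_const, volume_real_Ioo_of_le hrs, smul_eq_mul, mul_one]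
  ring

/-- Lower bound on the seed loss `pA` for a rectangular habitat
`H = (0,A) × (0,B)` and a dispersal kernel uniform on `(0,a) × (0,b)`:
`pA = ∬_{x_p∈H} ∬_{x∈Hᶜ} f_d(x−x_p) dA dA ≥ aB/2`. -/
theorem pA_ge_aB_div_two
    (A B a b : ℝ) (ha : 0 < a) (haA : a < A) (hb : 0 < b) (hbB : b < B) :
    a * B / 2 ≤
      ∫ xp in Set.Ioo 0 A ×ˢ Set.Ioo 0 B,
        ∫ x in (Set.Ioo 0 A ×ˢ Set.Ioo 0 B)ᶜ,
          (Set.Ioo 0 a ×ˢ Set.Ioo 0 b).indicator (fun _ => 1 / (a * b)) (x - xp) := by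
  change _ ≤ ∫ xp in _, ∫ x in _, uniformDensity a b (x - xp)
  set H := Ioo 0 A ×ˢ Ioo 0 B
  set T := Ioo (A - a) A ×ˢ Ioo 0 B
  have hTH : T ⊆ H := prod_mono (Ioo_subset_Ioo_left (by linarith)) le_rfl
  have hF : IntegrableOn (fun xp => ∫ x in Hᶜ, uniformDensity a b (x - xp)) H :=
    (integrable_uniformDensity a b).integrableOn_setIntegral_comp_sub_right
      (stronglyMeasurable_uniformDensity a b) (measurableSet_Ioo.prod measurableSet_Ioo).compl
      ((Metric.isBounded_Ioo 0 A).prod (Metric.isBounded_Ioo 0 B)).measure_lt_top.ne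
  have hedge : ∀ xp ∈ T,
      (xp.1 - (A - a)) / a ≤ ∫ x in Hᶜ, uniformDensity a b (x - xp) := by
    rintro xp ⟨⟨h₁, h₂⟩, -⟩
    refine div_le_setIntegral_uniformDensity_comp_sub ha hb (by linarith) (by linarith) xp ?_
    rintro x ⟨⟨hx, -⟩, -⟩ ⟨⟨-, hxA⟩, -⟩
    linarith
  have hstrip : ∫ xp in T, (xp.1 - (A - a)) / a = a * B / 2 := by
    rw [integral_div, setIntegral_Ioo_prod_Ioo_fst_sub (by linarith) (by linarith)]
    field_simp
    ring
  have hstrip_ne : ∫ xp in T, (xp.1 - (A - a)) / a ≠ 0 := by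
    rw [hstrip]
    exact (div_pos (mul_pos ha (hb.trans hbB)) two_pos).ne'
  calc a * B / 2 = ∫ xp in T, (xp.1 - (A - a)) / a := hstrip.symm
    _ ≤ ∫ xp in T, ∫ x in Hᶜ, uniformDensity a b (x - xp) :=
        setIntegral_mono_on (.of_integral_ne_zero hstrip_ne) (hF.mono_set hTH)
          (measurableSet_Ioo.prod measurableSet_Ioo) hedge
    _ ≤ ∫ xp in H, ∫ x in Hᶜ, uniformDensity a b (x - xp) :=
        setIntegral_mono_set hF
          (.of_forall fun _ => integral_nonneg fun _ => uniformDensity_nonneg ha.le hb.le _)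
          hTH.eventuallyLE
end

section
/- For every ε > 0 there exist a rectangular habitat H ⊂ ℝ² with area A and perimeter L and a probability density f_d on ℝ² with mean dispersal distance μ such that the seed-loss probability p = (1/A)∬_{x_p∈H}∬_{x∈Hᶜ} f_d(x−x_p) dA dA satisfies pA/(μL) > 1/2 − ε. Hence the constant 1/2 in the bound p ≤ μL/(2A) is optimal. -/
/-!
A seed released at `p ∈ H = (0,A) × (0,B)` with displacement `s ∈ (0,a) × (0,b)` leaves `H`
whenever it crosses the right edge, i.e. whenever `p₁ > A - s₁`; counting only these seeds gives
`pA ≥ aB/2`. Since `√(x₁² + x₂²) ≤ x₁ + x₂`, the mean dispersal distance is at most `(a + b)/2`,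
so `pA/(μL) ≥ aB/(2(a + b)(A + B))`, which tends to `1/2` as `b → 0` and `B → ∞`.
-/

open MeasureTheory Real Set
open scoped Pointwise

lemma setIntegral_Ioo_sub_left {l u : ℝ} (h : l ≤ u) :
    ∫ x in Ioo l u, (x - l) = (u - l) ^ 2 / 2 := by
  rw [← integral_Ioc_eq_integral_Ioo, ← intervalIntegral.integral_of_le h,
    intervalIntegral.integral_comp_sub_right (fun x => x), integral_id]
  ring

lemma setIntegral_Ioo_prod_Ioo_fst_sub_s11 {l u l' u' : ℝ} (h : l ≤ u) (h' : l' ≤ u') :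
    ∫ z in Ioo l u ×ˢ Ioo l' u', (z.1 - l) = (u - l) ^ 2 / 2 * (u' - l') := by
  simpa [Measure.volume_eq_prod, setIntegral_Ioo_sub_left h, volume_real_Ioo_of_le h'] using
    setIntegral_prod_mul (μ := volume) (ν := volume) (fun x => x - l) (fun _ => (1 : ℝ))
      (Ioo l u) (Ioo l' u')

lemma setIntegral_Ioo_prod_Ioo_snd_sub {l u l' u' : ℝ} (h : l ≤ u) (h' : l' ≤ u') :
    ∫ z in Ioo l u ×ˢ Ioo l' u', (z.2 - l') = (u' - l') ^ 2 / 2 * (u - l) := by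
  simpa [Measure.volume_eq_prod, setIntegral_Ioo_sub_left h', volume_real_Ioo_of_le h,
    mul_comm] using
    setIntegral_prod_mul (μ := volume) (ν := volume) (fun _ => (1 : ℝ)) (fun y => y - l')
      (Ioo l u) (Ioo l' u')

lemma integrableOn_Ioo_prod_Ioo {f : ℝ × ℝ → ℝ} (hf : Continuous f) (l u l' u' : ℝ) :
    IntegrableOn f (Ioo l u ×ˢ Ioo l' u') :=
  (hf.continuousOn.integrableOn_compact (isCompact_Icc.prod isCompact_Icc)).mono_set
    (prod_mono Ioo_subset_Icc_self Ioo_subset_Icc_self)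

lemma integrable_indicator_sub_prod {H S : Set (ℝ × ℝ)} (hH : Bornology.IsBounded H)
    (hS : Bornology.IsBounded S) (hSm : MeasurableSet S) (c : ℝ) (t : Set (ℝ × ℝ)) :
    Integrable (fun z : (ℝ × ℝ) × (ℝ × ℝ) => S.indicator (fun _ => c) (z.2 - z.1))
      ((volume.restrict H).prod (volume.restrict t)) := by
  set U : Set ((ℝ × ℝ) × (ℝ × ℝ)) := (fun z => z.2 - z.1) ⁻¹' S
  have hUm : MeasurableSet U := hSm.preimage (measurable_snd.sub measurable_fst)
  change Integrable (fun z => U.indicator (fun _ => c) z) _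
  rw [Measure.prod_restrict, integrable_indicator_iff hUm, IntegrableOn,
    Measure.restrict_restrict hUm]
  have hsub : U ∩ H ×ˢ t ⊆ H ×ˢ (H + S) := fun z ⟨hzU, hzH, _⟩ =>
    ⟨hzH, z.1, hzH, z.2 - z.1, hzU, add_sub_cancel z.1 z.2⟩
  refine integrableOn_const (measure_mono hsub |>.trans_lt ?_).ne
  rw [← Measure.volume_eq_prod]
  exact (hH.prod (hH.add hS)).measure_lt_top

lemma le_setIntegral_compl_indicator_sub {H : Set (ℝ × ℝ)} {A a b c : ℝ}
    (hH : H ⊆ {x | x.1 ≤ A}) (hb : 0 ≤ b) (hc : 0 ≤ c) {p : ℝ × ℝ} (hp₁ : A - a ≤ p.1)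
    (hp₂ : p.1 ≤ A) :
    (p.1 - (A - a)) * b * c ≤ ∫ x in Hᶜ, (Ioo 0 a ×ˢ Ioo 0 b).indicator (fun _ => c) (x - p) := by
  set S := Ioo 0 a ×ˢ Ioo 0 b
  set T := Ioo A (p.1 + a) ×ˢ Ioo p.2 (p.2 + b)
  have hSm : MeasurableSet S := measurableSet_Ioo.prod measurableSet_Ioo
  have hTm : MeasurableSet T := measurableSet_Ioo.prod measurableSet_Ioo
  have hTH : T ⊆ Hᶜ := fun x hxT hxH => (hH hxH).not_gt hxT.1.1
  have hTS : T ⊆ (· - p) ⁻¹' S := by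
    rintro x ⟨⟨h₁, h₂⟩, h₃, h₄⟩
    refine ⟨⟨?_, ?_⟩, ?_, ?_⟩ <;> simp only [Prod.fst_sub, Prod.snd_sub] <;> linarith
  have hSfin : volume S ≠ ⊤ :=
    ((Metric.isBounded_Ioo 0 a).prod (Metric.isBounded_Ioo 0 b)).measure_lt_top.ne
  have hint : Integrable (fun x => S.indicator (fun _ => c) (x - p)) :=
    ((integrable_indicator_iff hSm).2 (integrableOn_const hSfin)).comp_sub_right p
  calc (p.1 - (A - a)) * b * c = ∫ x in Hᶜ, T.indicator (fun _ => c) x := by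
        rw [integral_indicator hTm, Measure.restrict_restrict hTm,
          inter_eq_self_of_subset_left hTH, setIntegral_const, Measure.volume_eq_prod,
          measureReal_prod_prod, volume_real_Ioo_of_le (by linarith),
          volume_real_Ioo_of_le (by linarith), smul_eq_mul]
        ring
    _ ≤ _ := integral_mono_of_nonneg (.of_forall (indicator_nonneg fun _ _ => hc))
        hint.integrableOn (.of_forall fun x =>
          (indicator_le_indicator_of_subset hTS (fun _ => hc) x).trans_eq
            (indicator_comp_right (g := fun _ => c) (· - p)))

lemma le_setIntegral_setIntegral_compl_indicator_sub {A B a b c : ℝ} (ha : 0 ≤ a) (haA : a ≤ A)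
    (hb : 0 ≤ b) (hB : 0 ≤ B) (hc : 0 ≤ c) :
    a ^ 2 / 2 * B * b * c ≤ ∫ p in Ioo 0 A ×ˢ Ioo 0 B, ∫ x in (Ioo 0 A ×ˢ Ioo 0 B)ᶜ,
      (Ioo 0 a ×ˢ Ioo 0 b).indicator (fun _ => c) (x - p) := by
  set H := Ioo 0 A ×ˢ Ioo 0 B
  set R := Ioo (A - a) A ×ˢ Ioo 0 B
  have hRm : MeasurableSet R := measurableSet_Ioo.prod measurableSet_Ioo
  have hRH : R ⊆ H := prod_mono (Ioo_subset_Ioo_left (by linarith)) subset_rfl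
  have hint : Integrable (fun p => ∫ x in Hᶜ, (Ioo 0 a ×ˢ Ioo 0 b).indicator (fun _ => c) (x - p))
      (volume.restrict H) :=
    (integrable_indicator_sub_prod
      ((Metric.isBounded_Ioo 0 A).prod (Metric.isBounded_Ioo 0 B))
      ((Metric.isBounded_Ioo 0 a).prod (Metric.isBounded_Ioo 0 b))
      (measurableSet_Ioo.prod measurableSet_Ioo) c Hᶜ).integral_prod_left
  -- only seeds crossing the right edge `x₁ = A` are counted
  have hle : ∀ p, R.indicator (fun p => (p.1 - (A - a)) * b * c) p ≤
      ∫ x in Hᶜ, (Ioo 0 a ×ˢ Ioo 0 b).indicator (fun _ => c) (x - p) := by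
    intro p
    by_cases hp : p ∈ R
    · rw [indicator_of_mem hp]
      exact le_setIntegral_compl_indicator_sub (fun x hx => hx.1.2.le) hb hc hp.1.1.le hp.1.2.le
    · rw [indicator_of_notMem hp]
      exact integral_nonneg fun x => indicator_nonneg (fun _ _ => hc) _
  calc a ^ 2 / 2 * B * b * c = ∫ p in R, (p.1 - (A - a)) * b * c := by
        rw [integral_mul_const, integral_mul_const,
          setIntegral_Ioo_prod_Ioo_fst_sub_s11 (by linarith) hB]
        ring
    _ = ∫ p in H, R.indicator (fun p => (p.1 - (A - a)) * b * c) p := by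
        rw [integral_indicator hRm, Measure.restrict_restrict hRm,
          inter_eq_self_of_subset_left hRH]
    _ ≤ _ := integral_mono_of_nonneg
        (.of_forall (indicator_nonneg fun p hp => by have := sub_nonneg.2 hp.1.1.le; positivity))
        hint (.of_forall hle)

lemma integral_sqrt_mul_indicator_Ioo_prod_Ioo (a b c : ℝ) :
    ∫ x : ℝ × ℝ, √(x.1 ^ 2 + x.2 ^ 2) * (Ioo 0 a ×ˢ Ioo 0 b).indicator (fun _ => c) x =
      ∫ x in Ioo 0 a ×ˢ Ioo 0 b, √(x.1 ^ 2 + x.2 ^ 2) * c := by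
  simp_rw [← indicator_mul_right (f := fun x : ℝ × ℝ => √(x.1 ^ 2 + x.2 ^ 2))]
  exact integral_indicator (measurableSet_Ioo.prod measurableSet_Ioo)

lemma le_integral_sqrt_mul_indicator {a b c : ℝ} (ha : 0 ≤ a) (hb : 0 ≤ b) (hc : 0 ≤ c) :
    a ^ 2 / 2 * b * c ≤
      ∫ x : ℝ × ℝ, √(x.1 ^ 2 + x.2 ^ 2) * (Ioo 0 a ×ˢ Ioo 0 b).indicator (fun _ => c) x := by
  rw [integral_sqrt_mul_indicator_Ioo_prod_Ioo]
  calc a ^ 2 / 2 * b * c = ∫ x in Ioo 0 a ×ˢ Ioo 0 b, x.1 * c := by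
        have h := setIntegral_Ioo_prod_Ioo_fst_sub_s11 ha hb
        simp only [sub_zero] at h
        rw [integral_mul_const, h]
    _ ≤ _ := setIntegral_mono_on (integrableOn_Ioo_prod_Ioo (by fun_prop) ..)
        (integrableOn_Ioo_prod_Ioo (by fun_prop) ..) (measurableSet_Ioo.prod measurableSet_Ioo)
        fun x _ => mul_le_mul_of_nonneg_right
          (le_sqrt_of_sq_le (le_add_of_nonneg_right (sq_nonneg _))) hc

lemma integral_sqrt_mul_indicator_le {a b c : ℝ} (ha : 0 ≤ a) (hb : 0 ≤ b) (hc : 0 ≤ c) :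
    ∫ x : ℝ × ℝ, √(x.1 ^ 2 + x.2 ^ 2) * (Ioo 0 a ×ˢ Ioo 0 b).indicator (fun _ => c) x ≤
      (a ^ 2 / 2 * b + b ^ 2 / 2 * a) * c := by
  rw [integral_sqrt_mul_indicator_Ioo_prod_Ioo]
  calc ∫ x in Ioo 0 a ×ˢ Ioo 0 b, √(x.1 ^ 2 + x.2 ^ 2) * c
      ≤ ∫ x in Ioo 0 a ×ˢ Ioo 0 b, (x.1 * c + x.2 * c) :=
        setIntegral_mono_on (integrableOn_Ioo_prod_Ioo (by fun_prop) ..)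
          (integrableOn_Ioo_prod_Ioo (by fun_prop) ..) (measurableSet_Ioo.prod measurableSet_Ioo)
          fun x hx => by
            rw [← add_mul]
            refine mul_le_mul_of_nonneg_right ((sqrt_le_left ?_).2 ?_) hc
            · linarith [hx.1.1, hx.2.1]
            · nlinarith [hx.1.1, hx.2.1]
    _ = _ := by
        rw [integral_add (integrableOn_Ioo_prod_Ioo (by fun_prop) ..)
          (integrableOn_Ioo_prod_Ioo (by fun_prop) ..), integral_mul_const, integral_mul_const]
        have h₁ := setIntegral_Ioo_prod_Ioo_fst_sub_s11 ha hb
        have h₂ := setIntegral_Ioo_prod_Ioo_snd_sub ha hb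
        simp only [sub_zero] at h₁ h₂
        rw [h₁, h₂, add_mul]

lemma div_le_loss_ratio {A B a b : ℝ} (ha : 0 < a) (haA : a ≤ A) (hb : 0 < b) (hB : 0 ≤ B) :
    a * B / (2 * (a + b) * (A + B)) ≤
      (∫ p in Ioo 0 A ×ˢ Ioo 0 B, ∫ x in (Ioo 0 A ×ˢ Ioo 0 B)ᶜ,
          (Ioo 0 a ×ˢ Ioo 0 b).indicator (fun _ => 1 / (a * b)) (x - p)) /
        ((∫ x : ℝ × ℝ, √(x.1 ^ 2 + x.2 ^ 2) *
            (Ioo 0 a ×ˢ Ioo 0 b).indicator (fun _ => 1 / (a * b)) x) * (2 * (A + B))) := by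
  have hc : 0 ≤ 1 / (a * b) := by positivity
  have hA : 0 < A := ha.trans_le haA
  have hnum := le_setIntegral_setIntegral_compl_indicator_sub ha.le haA hb.le hB hc
  have hμ₁ := le_integral_sqrt_mul_indicator ha.le hb.le hc
  have hμ₂ := integral_sqrt_mul_indicator_le ha.le hb.le hc
  rw [show a ^ 2 / 2 * B * b * (1 / (a * b)) = a * B / 2 by field_simp] at hnum
  rw [show a ^ 2 / 2 * b * (1 / (a * b)) = a / 2 by field_simp] at hμ₁
  rw [show (a ^ 2 / 2 * b + b ^ 2 / 2 * a) * (1 / (a * b)) = (a + b) / 2 by field_simp]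
    at hμ₂
  calc a * B / (2 * (a + b) * (A + B)) = a * B / 2 / ((a + b) / 2 * (2 * (A + B))) := by
        field_simp
    _ ≤ _ := div_le_div₀ ((by positivity : 0 ≤ a * B / 2).trans hnum) hnum
        (mul_pos ((half_pos ha).trans_le hμ₁) (by positivity))
        (mul_le_mul_of_nonneg_right hμ₂ (by positivity))

/-- Sharpness of the asymmetric bound `p ≤ μL/(2A)`: for every `ε > 0` there
are a rectangular habitat `H = (0,A) × (0,B)` (with area `A·B` and perimeter
`L = 2(A+B)`) and a dispersal density `f_d` (uniform on `(0,a) × (0,b)`, with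
mean dispersal distance `μ`) such that `pA/(μL) > 1/2 − ε`, where
`pA = ∬_{x_p∈H} ∬_{x∈Hᶜ} f_d(x−x_p)`.  Hence the constant `1/2` is optimal. -/
theorem asymmetric_bound_sharp (ε : ℝ) (hε : 0 < ε) :
    ∃ A B a b : ℝ, 0 < a ∧ a < A ∧ 0 < b ∧ b < B ∧
      (∫ xp in Set.Ioo 0 A ×ˢ Set.Ioo 0 B,
          ∫ x in (Set.Ioo 0 A ×ˢ Set.Ioo 0 B)ᶜ,
            (Set.Ioo 0 a ×ˢ Set.Ioo 0 b).indicator (fun _ => 1 / (a * b)) (x - xp)) /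
        ((∫ x : ℝ × ℝ, Real.sqrt (x.1 ^ 2 + x.2 ^ 2) *
            (Set.Ioo 0 a ×ˢ Set.Ioo 0 b).indicator (fun _ => 1 / (a * b)) x) *
          (2 * (A + B)))
      > 1 / 2 - ε := by
  set b := min ε 1
  set B := 2 / ε + 2
  have hb : 0 < b := lt_min hε one_pos
  have hbε : b ≤ ε := min_le_left ε 1
  have hbB : b < B := by
    have : 0 < 2 / ε := by positivity
    linarith [min_le_right ε 1]
  have hεB : ε * B = 2 + 2 * ε := by simp only [B]; field_simp
  refine ⟨2, B, 1, b, one_pos, one_lt_two, hb, hbB,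
    lt_of_lt_of_le ?_ (div_le_loss_ratio one_pos one_lt_two.le hb (hb.trans hbB).le)⟩
  -- with `B = 2/ε + 2` the ratio is `(1 + ε) / ((1 + b)(2 + 4ε)) ≥ 1 / (2 + 4ε) > 1/2 - ε`
  rw [lt_div_iff₀ (by positivity), ← mul_lt_mul_iff_right₀ hε]
  nlinarith [mul_nonneg hb.le (sq_nonneg ε)]
end

section
/- Let H be the open disk of radius R_H centered at the origin and f_d the uniform density on the disk of radius R_d, with 0 < R_d < R_H. Then the seed-loss probability p = (1/(πR_H²)) ∬_{x_p∈H} ∬_{x∈Hᶜ} f_d(x−x_p) dA dA satisfies pA/(μL) ≥ (R_H − R_d)/(πR_H), where A = πR_H², L = 2πR_H, μ = (2/3)R_d. -/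
/-!
For `xp ∈ H` with `|xp| = r`, let `S(h)` (`capArea R_d h`) be the area of the segment
`{y ∈ D : y₁ ≥ h}` of the dispersal disk `D`. Rotated into the direction of `xp`, the segment
of `xp + D` at level `R_H - r` lies beyond the tangent line to `∂H`, hence outside `H`, so the
mass lost from `xp` is at least `S(R_H - r)`, which vanishes for `r ≤ R_H - R_d`. In polar
coordinates
`∫_H S(R_H - |xp|) = 2π ∫₀^{R_H} r S(R_H - r) dr ≥ 2π (R_H - R_d) ∫₀^{R_d} S(t) dt`,
and `∫₀^{R_d} S(t) dt = ∫₀^{R_d} 2s √(R_d² - s²) ds = (2/3) R_d³`.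
-/

open MeasureTheory Real Set
open intervalIntegral

theorem integral_integral_eq_integral_sub_mul {f : ℝ → ℝ} (hf : Continuous f) (a b : ℝ) :
    ∫ t in a..b, ∫ s in t..b, f s = ∫ s in a..b, (s - a) * f s := by
  have := integral_mul_deriv_eq_deriv_mul (u := fun t => t - a) (u' := fun _ => 1)
    (v := fun t => ∫ s in t..b, f s) (v' := fun t => -f t)
    (fun t _ => (hasDerivAt_id t).sub_const a)
    (fun t _ => integral_hasDerivAt_left (hf.intervalIntegrable _ _)
      (hf.stronglyMeasurableAtFilter _ _) hf.continuousAt)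
    intervalIntegrable_const (hf.neg.intervalIntegrable a b)
  simp only [mul_neg, intervalIntegral.integral_neg, integral_same, mul_zero, sub_self,
    one_mul, zero_mul] at this
  linarith

theorem integral_mul_sqrt_sq_sub {R : ℝ} (hR : 0 ≤ R) :
    ∫ s in 0..R, s * (2 * √(R ^ 2 - s ^ 2)) = 2 / 3 * R ^ 3 := by
  have hderiv : ∀ s : ℝ, HasDerivAt (fun s => -(2 / 3) * (R ^ 2 - s ^ 2) ^ (3 / 2 : ℝ))
      (s * (2 * √(R ^ 2 - s ^ 2))) s := by
    intro s
    have := (((hasDerivAt_pow 2 s).const_sub (R ^ 2)).rpow_const (p := 3 / 2)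
      (Or.inr (by norm_num))).const_mul (-(2 / 3))
    refine this.congr_deriv ?_
    rw [Real.sqrt_eq_rpow]
    norm_num
    ring
  rw [integral_eq_sub_of_hasDerivAt (fun s _ => hderiv s)
    (Continuous.intervalIntegrable (by fun_prop) _ _)]
  have hR3 : (R ^ 2) ^ (3 / 2 : ℝ) = R ^ 3 := by
    rw [← Real.rpow_natCast_mul hR]
    norm_num
  norm_num [hR3]

theorem measure_preimage_sub_const {G : Type*} [MeasurableSpace G] [AddGroup G]
    [MeasurableAdd G] (μ : Measure G) [μ.IsAddRightInvariant] (p : G) (s : Set G) :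
    μ ((fun x => x - p) ⁻¹' s) = μ s := by
  simp_rw [sub_eq_add_neg]
  exact measure_preimage_add_right μ (-p) s

theorem setIntegral_indicator_sub_const {G : Type*} [MeasurableSpace G] [AddGroup G]
    [MeasurableSub G] {μ : Measure G} {s D : Set G} (hD : MeasurableSet D) (c : ℝ) (p : G) :
    ∫ x in s, D.indicator (fun _ => c) (x - p) ∂μ =
      μ.real (s ∩ (fun x => x - p) ⁻¹' D) * c := by
  simp_rw [← indicator_comp_right (fun x => x - p)]
  rw [setIntegral_indicator (measurable_sub_const p hD)]
  exact setIntegral_const c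

theorem integrableOn_measureReal_inter_preimage_sub {G : Type*} [MeasurableSpace G] [AddGroup G]
    [MeasurableAdd G] [MeasurableSub₂ G] {μ : Measure G} [SFinite μ] [μ.IsAddRightInvariant]
    {H s D : Set G} (hH : μ H ≠ ⊤) (hs : MeasurableSet s) (hD : MeasurableSet D)
    (hDfin : μ D ≠ ⊤) :
    IntegrableOn (fun p => μ.real (s ∩ (fun x => x - p) ⁻¹' D)) H μ := by
  have hmeas : Measurable fun p => μ (s ∩ (fun x => x - p) ⁻¹' D) :=
    measurable_measure_prodMk_left
      ((hs.preimage measurable_snd).inter (hD.preimage (measurable_snd.sub measurable_fst)))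
  refine Measure.integrableOn_of_bounded hH hmeas.ennreal_toReal.aestronglyMeasurable
    (M := μ.real D) (Filter.Eventually.of_forall fun p => ?_)
  rw [Real.norm_of_nonneg measureReal_nonneg, measureReal_def, measureReal_def,
    ← measure_preimage_sub_const μ p D]
  exact ENNReal.toReal_mono (by rwa [measure_preimage_sub_const]) (measure_mono inter_subset_right)

def disk (R : ℝ) : Set (ℝ × ℝ) := {y | y.1 ^ 2 + y.2 ^ 2 < R ^ 2}

def diskCap (R h : ℝ) : Set (ℝ × ℝ) := disk R ∩ {y | h ≤ y.1}

noncomputable def capArea (R h : ℝ) : ℝ := volume.real (diskCap R h)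

theorem measurableSet_disk (R : ℝ) : MeasurableSet (disk R) :=
  (isOpen_lt (by fun_prop) continuous_const).measurableSet

theorem disk_subset_ball (R : ℝ) : disk R ⊆ Metric.ball 0 |R| := by
  intro y (hy : y.1 ^ 2 + y.2 ^ 2 < R ^ 2)
  rw [mem_ball_zero_iff, Prod.norm_def, max_lt_iff, Real.norm_eq_abs, Real.norm_eq_abs,
    ← sq_lt_sq, ← sq_lt_sq]
  constructor <;> nlinarith [sq_nonneg y.1, sq_nonneg y.2]

theorem volume_disk_ne_top (R : ℝ) : volume (disk R) ≠ ⊤ :=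
  ((measure_mono (disk_subset_ball R)).trans_lt measure_ball_lt_top).ne

theorem diskCap_eq_regionBetween {R : ℝ} (hR : 0 ≤ R) (h : ℝ) :
    diskCap R h =
      regionBetween (fun s => -√(R ^ 2 - s ^ 2)) (fun s => √(R ^ 2 - s ^ 2)) (Ico h R) := by
  ext ⟨y₁, y₂⟩
  have hchord : y₁ ^ 2 + y₂ ^ 2 < R ^ 2 ↔ |y₂| < √(R ^ 2 - y₁ ^ 2) := by
    rw [Real.lt_sqrt (abs_nonneg _), sq_abs]
    constructor <;> intro <;> linarith
  simp only [diskCap, disk, regionBetween, mem_inter_iff, mem_ofPred_eq, mem_Ico, mem_Ioo,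
    ← abs_lt, ← hchord]
  constructor
  · rintro ⟨hy, hh⟩
    exact ⟨⟨hh, (abs_lt_of_sq_lt_sq' (by nlinarith [sq_nonneg y₂]) hR).2⟩, hy⟩
  · rintro ⟨⟨hh, -⟩, hy⟩
    exact ⟨hy, hh⟩

theorem capArea_eq_integral {R h : ℝ} (hR : 0 ≤ R) (hh : h ≤ R) :
    capArea R h = ∫ s in h..R, 2 * √(R ^ 2 - s ^ 2) := by
  have hchord : IntegrableOn (fun s => √(R ^ 2 - s ^ 2)) (Ico h R) :=
    (Continuous.integrableOn_Icc (by fun_prop)).mono_set Ico_subset_Icc_self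
  rw [capArea, measureReal_def, diskCap_eq_regionBetween hR, Measure.volume_eq_prod,
    volume_regionBetween_eq_integral (f := fun s => -√(R ^ 2 - s ^ 2)) hchord.neg hchord
      measurableSet_Ico (fun s _ => neg_le_self (Real.sqrt_nonneg _)),
    integral_of_le hh, integral_Ioc_eq_integral_Ioo, ← integral_Ico_eq_integral_Ioo,
    ENNReal.toReal_ofReal (setIntegral_nonneg measurableSet_Ico fun s _ => by simp)]
  simp only [Pi.sub_apply, sub_neg_eq_add, two_mul]

theorem capArea_eq_zero {R h : ℝ} (hR : 0 ≤ R) (hh : R ≤ h) : capArea R h = 0 := by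
  simp [capArea, diskCap_eq_regionBetween hR, Ico_eq_empty_of_le hh, regionBetween]

theorem antitone_capArea (R : ℝ) : Antitone (capArea R) := fun _ _ hle =>
  measureReal_mono (inter_subset_inter_right _ fun _ hy => hle.trans hy)
    (ne_top_of_le_ne_top (volume_disk_ne_top R) (measure_mono inter_subset_left))

theorem integral_capArea {R : ℝ} (hR : 0 ≤ R) : ∫ t in 0..R, capArea R t = 2 / 3 * R ^ 3 := by
  calc ∫ t in 0..R, capArea R t = ∫ t in 0..R, ∫ s in t..R, 2 * √(R ^ 2 - s ^ 2) :=
        integral_congr fun t ht => capArea_eq_integral hR (by rw [uIcc_of_le hR] at ht; exact ht.2)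
    _ = ∫ s in 0..R, (s - 0) * (2 * √(R ^ 2 - s ^ 2)) :=
        integral_integral_eq_integral_sub_mul (by fun_prop) 0 R
    _ = 2 / 3 * R ^ 3 := by simpa using integral_mul_sqrt_sq_sub hR

noncomputable def planeRotation (θ : ℝ) : (ℝ × ℝ) →ₗ[ℝ] ℝ × ℝ where
  toFun y := (cos θ * y.1 + sin θ * y.2, -sin θ * y.1 + cos θ * y.2)
  map_add' x y := by ext <;> simp <;> ring
  map_smul' c y := by ext <;> simp <;> ring

theorem det_planeRotation (θ : ℝ) : LinearMap.det (planeRotation θ) = 1 := by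
  rw [← LinearMap.det_toMatrix (Module.Basis.finTwoProd ℝ), Matrix.det_fin_two]
  simp [LinearMap.toMatrix_apply, planeRotation, Module.Basis.finTwoProd]
  nlinarith [sin_sq_add_cos_sq θ]

theorem volume_preimage_planeRotation (θ : ℝ) (s : Set (ℝ × ℝ)) :
    volume (planeRotation θ ⁻¹' s) = volume s := by
  rw [Measure.addHaar_preimage_linearMap volume (by simp [det_planeRotation]), det_planeRotation]
  simp

theorem exists_eq_polar (p : ℝ × ℝ) :
    ∃ θ, p = (√(p.1 ^ 2 + p.2 ^ 2) * cos θ, √(p.1 ^ 2 + p.2 ^ 2) * sin θ) := by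
  set z : ℂ := ⟨p.1, p.2⟩
  have hz : ‖z‖ = √(p.1 ^ 2 + p.2 ^ 2) := by
    rw [Complex.norm_def, Complex.normSq_apply, ← sq, ← sq]
  refine ⟨z.arg, ?_⟩
  rw [← hz, Complex.norm_mul_cos_arg, Complex.norm_mul_sin_arg]

theorem preimage_planeRotation_diskCap_subset {RH Rd r θ : ℝ} (hRH : 0 ≤ RH) {p : ℝ × ℝ}
    (hp : p = (r * cos θ, r * sin θ)) :
    (fun x => x - p) ⁻¹' (planeRotation θ ⁻¹' diskCap Rd (RH - r)) ⊆
      (disk RH)ᶜ ∩ (fun x => x - p) ⁻¹' disk Rd := by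
  rintro x ⟨hv, hh⟩
  simp only [planeRotation, disk, LinearMap.coe_mk, AddHom.coe_mk, mem_ofPred_eq, Prod.fst_sub,
    Prod.snd_sub, hp] at hv hh
  refine ⟨fun hx => ?_, ?_⟩
  · simp only [disk, mem_ofPred_eq] at hx
    have hu : RH ≤ cos θ * x.1 + sin θ * x.2 := by
      linear_combination hh - r * sin_sq_add_cos_sq θ
    have hcs : (cos θ * x.1 + sin θ * x.2) ^ 2 ≤ x.1 ^ 2 + x.2 ^ 2 := by
      nlinarith [sin_sq_add_cos_sq θ, sq_nonneg (sin θ * x.1 - cos θ * x.2)]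
    nlinarith
  · simp only [disk, mem_preimage, mem_ofPred_eq, Prod.fst_sub, Prod.snd_sub, hp]
    nlinarith [sin_sq_add_cos_sq θ]

theorem capArea_le_measureReal_compl_disk_inter {RH : ℝ} (hRH : 0 ≤ RH) (Rd : ℝ)
    (p : ℝ × ℝ) :
    capArea Rd (RH - √(p.1 ^ 2 + p.2 ^ 2)) ≤
      volume.real ((disk RH)ᶜ ∩ (fun x => x - p) ⁻¹' disk Rd) := by
  obtain ⟨θ, hθ⟩ := exists_eq_polar p
  calc capArea Rd (RH - √(p.1 ^ 2 + p.2 ^ 2))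
      = volume.real ((fun x => x - p) ⁻¹'
          (planeRotation θ ⁻¹' diskCap Rd (RH - √(p.1 ^ 2 + p.2 ^ 2)))) := by
        rw [capArea, measureReal_def, measureReal_def, measure_preimage_sub_const,
          volume_preimage_planeRotation]
    _ ≤ _ := measureReal_mono (preimage_planeRotation_diskCap_subset hRH hθ)
        (ne_top_of_le_ne_top (by rw [measure_preimage_sub_const]; exact volume_disk_ne_top Rd)
          (measure_mono inter_subset_right))

theorem setIntegral_disk_comp_sqrt (f : ℝ → ℝ) {R : ℝ} (hR : 0 ≤ R) :
    ∫ x in disk R, f √(x.1 ^ 2 + x.2 ^ 2) = 2 * π * ∫ r in 0..R, r * f r := by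
  have hpolar : ∀ q ∈ polarCoord.target,
      q.1 • (disk R).indicator (fun x => f √(x.1 ^ 2 + x.2 ^ 2)) (polarCoord.symm q) =
        (Ioo 0 R ×ˢ Ioo (-π) π).indicator (fun q => q.1 * f q.1) q := by
    rintro ⟨r, θ⟩ ⟨hr : 0 < r, hθ : θ ∈ Ioo (-π) π⟩
    have hnorm : (r * cos θ) ^ 2 + (r * sin θ) ^ 2 = r ^ 2 := by
      linear_combination r ^ 2 * cos_sq_add_sin_sq θ
    have hmem : polarCoord.symm (r, θ) ∈ disk R ↔ (r, θ) ∈ Ioo 0 R ×ˢ Ioo (-π) π := by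
      simp only [polarCoord_symm_apply, disk, mem_ofPred_eq, hnorm, mem_prod, mem_Ioo]
      rw [pow_lt_pow_iff_left₀ hr.le hR two_ne_zero]
      simp [hr, hθ.1, hθ.2]
    by_cases h : (r, θ) ∈ Ioo 0 R ×ˢ Ioo (-π) π
    · rw [indicator_of_mem (hmem.2 h), indicator_of_mem h, polarCoord_symm_apply, hnorm,
        Real.sqrt_sq (le_of_lt hr), smul_eq_mul]
    · rw [indicator_of_notMem (mt hmem.1 h), indicator_of_notMem h, smul_zero]
  have hsub : Ioo 0 R ×ˢ Ioo (-π) π ⊆ polarCoord.target := by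
    rw [polarCoord_target]
    exact prod_mono Ioo_subset_Ioi_self subset_rfl
  rw [← MeasureTheory.integral_indicator (measurableSet_disk R),
    ← integral_comp_polarCoord_symm,
    setIntegral_congr_fun polarCoord.open_target.measurableSet hpolar,
    setIntegral_indicator (measurableSet_Ioo.prod measurableSet_Ioo),
    inter_eq_self_of_subset_right hsub,
    Measure.volume_eq_prod]
  have hsplit := setIntegral_prod_mul (μ := volume) (ν := volume) (fun r => r * f r)
    (fun _ => (1 : ℝ)) (Ioo 0 R) (Ioo (-π) π)
  simp only [mul_one] at hsplit
  rw [hsplit, integral_of_le hR, integral_Ioc_eq_integral_Ioo, setIntegral_const,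
    Real.volume_real_Ioo]
  rw [sub_neg_eq_add, max_eq_left (by positivity)]
  ring

theorem le_integral_mul_capArea_sub {Rd RH : ℝ} (hRd : 0 ≤ Rd) (hRdH : Rd ≤ RH) :
    (RH - Rd) * (2 / 3 * Rd ^ 3) ≤ ∫ r in 0..RH, r * capArea Rd (RH - r) := by
  have hRH : 0 ≤ RH := hRd.trans hRdH
  have hint : IntervalIntegrable (fun r => capArea Rd (RH - r)) volume 0 RH :=
    ((antitone_capArea Rd).comp fun _ _ h => sub_le_sub_left h RH).intervalIntegrable
  have htotal : ∫ r in 0..RH, capArea Rd (RH - r) = 2 / 3 * Rd ^ 3 := by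
    rw [integral_comp_sub_left (capArea Rd), sub_self, sub_zero,
      ← integral_add_adjacent_intervals (b := Rd) (antitone_capArea Rd).intervalIntegrable
        (antitone_capArea Rd).intervalIntegrable, integral_capArea hRd,
      integral_congr (g := 0) fun t ht =>
        capArea_eq_zero hRd (by rw [uIcc_of_le hRdH] at ht; exact ht.1)]
    simp
  calc (RH - Rd) * (2 / 3 * Rd ^ 3) = ∫ r in 0..RH, (RH - Rd) * capArea Rd (RH - r) := by
        rw [intervalIntegral.integral_const_mul, htotal]
    _ ≤ ∫ r in 0..RH, r * capArea Rd (RH - r) := by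
        refine integral_mono_on hRH (hint.const_mul _) (hint.continuousOn_mul continuousOn_id)
          fun r _ => ?_
        rcases le_or_gt r (RH - Rd) with hr | hr
        · simp [capArea_eq_zero hRd (by linarith : Rd ≤ RH - r)]
        · exact mul_le_mul_of_nonneg_right hr.le measureReal_nonneg

theorem le_setIntegral_measureReal_compl_disk_inter {RH Rd : ℝ} (hRd : 0 ≤ Rd)
    (hRdH : Rd ≤ RH) :
    2 * π * ((RH - Rd) * (2 / 3 * Rd ^ 3)) ≤
      ∫ xp in disk RH, volume.real ((disk RH)ᶜ ∩ (fun x => x - xp) ⁻¹' disk Rd) := by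
  have hRH : 0 ≤ RH := hRd.trans hRdH
  calc 2 * π * ((RH - Rd) * (2 / 3 * Rd ^ 3))
      ≤ 2 * π * ∫ r in 0..RH, r * capArea Rd (RH - r) := by
        gcongr
        exact le_integral_mul_capArea_sub hRd hRdH
    _ = ∫ xp in disk RH, capArea Rd (RH - √(xp.1 ^ 2 + xp.2 ^ 2)) :=
        (setIntegral_disk_comp_sqrt (fun r => capArea Rd (RH - r)) hRH).symm
    _ ≤ _ :=
        integral_mono_of_nonneg (Filter.Eventually.of_forall fun _ => measureReal_nonneg)
          (integrableOn_measureReal_inter_preimage_sub (volume_disk_ne_top RH)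
            (measurableSet_disk RH).compl (measurableSet_disk Rd) (volume_disk_ne_top Rd))
          (Filter.Eventually.of_forall (capArea_le_measureReal_compl_disk_inter hRH Rd))

/-- Lower bound for the disk habitat.  `H` is the open disk of radius `R_H`
(area `A = πR_H²`, perimeter `L = 2πR_H`) and `f_d` is uniform on the disk of
radius `R_d < R_H` (mean dispersal distance `μ = (2/3)R_d`).  With
`pA = ∬_{x_p∈H} ∬_{x∈Hᶜ} f_d(x−x_p)` and `p = pA/A`, we have
`pA/(μL) ≥ (R_H − R_d)/(πR_H)`. -/
theorem disk_pA_div_muL_ge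
    (RH Rd : ℝ) (hRd : 0 < Rd) (hRdH : Rd < RH) :
    (∫ xp in {y : ℝ × ℝ | y.1 ^ 2 + y.2 ^ 2 < RH ^ 2},
        ∫ x in {y : ℝ × ℝ | y.1 ^ 2 + y.2 ^ 2 < RH ^ 2}ᶜ,
          ({y : ℝ × ℝ | y.1 ^ 2 + y.2 ^ 2 < Rd ^ 2}.indicator
            (fun _ => 1 / (Real.pi * Rd ^ 2)) (x - xp))) /
      (((2 / 3) * Rd) * (2 * Real.pi * RH))
    ≥ (RH - Rd) / (Real.pi * RH) := by
  have hRH : 0 < RH := hRd.trans hRdH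
  change (∫ xp in disk RH, ∫ x in (disk RH)ᶜ,
      (disk Rd).indicator (fun _ => 1 / (π * Rd ^ 2)) (x - xp)) / _ ≥ _
  simp_rw [setIntegral_indicator_sub_const (measurableSet_disk Rd),
    MeasureTheory.integral_mul_const]
  have hloss := le_setIntegral_measureReal_compl_disk_inter hRd.le hRdH.le
  calc (RH - Rd) / (π * RH)
      = 2 * π * ((RH - Rd) * (2 / 3 * Rd ^ 3)) * (1 / (π * Rd ^ 2)) /
          (2 / 3 * Rd * (2 * π * RH)) := by
        field_simp
    _ ≤ _ := by gcongr
end
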